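/- arXiv:1708.07998 — 6 statements merged into one kernel-verified Lean document; each statement's English description precedes it below -/
import Mathlib

section
/- For integers a, b ≥ 1 and distinct reals x, y, the rational function 1/((z+x)^a (z+y)^b) admits the partial fraction decomposition 1/((z+x)^a (z+y)^b) = Σ_{k=1}^{a} A_k(a,b)/((z+x)^k (y-x)^{a+b-k}) + Σ_{k=1}^{b} B_k(a,b)/((z+y)^k (y-x)^{a+b-k}) for all z with z ≠ -x and z ≠ -y, where A_k(a,b) = (-1)^{a+k} C(a+b-k-1, a-k) and B_k(a,b) = (-1)^a C(a+b-k-1, b-k). -/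
open Finset

/-- Base case `b = 0`: the A-sum collapses to its top term `1/u^a`. -/
lemma pf_baseA (u d : ℝ) (a : ℕ) (ha : 1 ≤ a) :
    (∑ k ∈ Finset.Icc 1 a,
      ((-1 : ℝ) ^ (a + k) * ((a - k - 1).choose (a - k) : ℝ)) / (u ^ k * d ^ (a - k)))
      = 1 / u ^ a := by
  rw [Finset.sum_eq_single_of_mem a (Finset.mem_Icc.mpr ⟨ha, le_refl a⟩)]
  · have hs : ((-1 : ℝ)) ^ (a + a) = 1 := by
      rw [show a + a = 2 * a from by omega, pow_mul]; norm_num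
    simp [Nat.sub_self, hs]
  · intro k hk hka
    have hk' := Finset.mem_Icc.mp hk
    rw [Nat.choose_eq_zero_of_lt (by omega : a - k - 1 < a - k)]
    simp

lemma pf_key (u d : ℝ) (hu : u ≠ 0) (hd : d ≠ 0) (hv : u + d ≠ 0) :
    ∀ n a b : ℕ, a + b = n + 1 →
    1 / (u ^ a * (u + d) ^ b) =
      (∑ k ∈ Finset.Icc 1 a,
        ((-1 : ℝ) ^ (a + k) * (Nat.choose (a + b - k - 1) (a - k) : ℝ)) /
          (u ^ k * d ^ (a + b - k))) +
      (∑ k ∈ Finset.Icc 1 b,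
        ((-1 : ℝ) ^ a * (Nat.choose (a + b - k - 1) (b - k) : ℝ)) /
          ((u + d) ^ k * d ^ (a + b - k))) := by
  intro n
  induction n with
  | zero =>
    intro a b hab
    rcases Nat.eq_zero_or_pos b with hb0 | hbpos
    · subst hb0
      have ha : a = 1 := by omega
      subst ha
      norm_num
    · have ha0 : a = 0 := by omega
      have hb1 : b = 1 := by omega
      subst ha0; subst hb1
      norm_num
  | succ n ih =>
    intro a b hab
    rcases Nat.eq_zero_or_pos b with hb0 | hbpos
    · subst hb0
      simp only [add_zero, pow_zero, mul_one]
      rw [show Finset.Icc 1 0 = (∅ : Finset ℕ) from rfl]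
      rw [Finset.sum_empty, add_zero, pf_baseA u d a (by omega)]
    · rcases Nat.eq_zero_or_pos a with ha0 | hapos
      · subst ha0
        simp only [zero_add, pow_zero, one_mul, pow_zero]
        rw [show Finset.Icc 1 0 = (∅ : Finset ℕ) from rfl]
        rw [Finset.sum_empty, zero_add]
        rw [Finset.sum_eq_single_of_mem b (Finset.mem_Icc.mpr ⟨by omega, le_refl b⟩)]
        · simp [Nat.sub_self]
        · intro k hk hkb
          have hk' := Finset.mem_Icc.mp hk
          rw [Nat.choose_eq_zero_of_lt (by omega : b - k - 1 < b - k)]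
          simp
      · obtain ⟨p, rfl⟩ : ∃ p, a = p + 1 := ⟨a - 1, by omega⟩
        obtain ⟨q, rfl⟩ : ∃ q, b = q + 1 := ⟨b - 1, by omega⟩
        have h1 := ih (p + 1) q (by omega)
        have h2 := ih p (q + 1) (by omega)
        have hrec : 1 / (u ^ (p + 1) * (u + d) ^ (q + 1)) =
            (1 / (u ^ (p + 1) * (u + d) ^ q) - 1 / (u ^ p * (u + d) ^ (q + 1))) / d := by
          field_simp
          ring
        rw [hrec, h1, h2, div_eq_iff hd]
        simp only [Finset.sum_Icc_succ_top (show (1:ℕ) ≤ p + 1 from by omega),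
          Finset.sum_Icc_succ_top (show (1:ℕ) ≤ q + 1 from by omega)]
        -- abbreviations for the eight pieces
        have hA : (∑ k ∈ Finset.Icc 1 p,
              ((-1 : ℝ) ^ (p + 1 + k) * (((p+1) + (q+1) - k - 1).choose ((p+1) - k) : ℝ)) /
                (u ^ k * d ^ ((p+1) + (q+1) - k))) * d
            = (∑ k ∈ Finset.Icc 1 p,
              ((-1 : ℝ) ^ (p + 1 + k) * (((p+1) + q - k - 1).choose ((p+1) - k) : ℝ)) /
                (u ^ k * d ^ ((p+1) + q - k)))
            - (∑ k ∈ Finset.Icc 1 p,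
              ((-1 : ℝ) ^ (p + k) * ((p + (q+1) - k - 1).choose (p - k) : ℝ)) /
                (u ^ k * d ^ (p + (q+1) - k))) := by
          rw [Finset.sum_mul, ← Finset.sum_sub_distrib]
          apply Finset.sum_congr rfl
          intro k hk
          obtain ⟨hk1, hk2⟩ := Finset.mem_Icc.mp hk
          obtain ⟨m, rfl⟩ : ∃ m, p = k + m := ⟨p - k, by omega⟩
          simp only [show k+m+1+(q+1)-k-1 = m+q+1 from by omega,
            show k+m+1-k = m+1 from by omega,
            show k+m+1+(q+1)-k = m+q+2 from by omega,
            show k+m+1+q-k-1 = m+q from by omega,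
            show k+m+1+q-k = m+q+1 from by omega,
            show k+m+(q+1)-k-1 = m+q from by omega,
            show k+m-k = m from by omega,
            show k+m+(q+1)-k = m+q+1 from by omega,
            show m+q+2-1 = m+q+1 from by omega,
            show m+q+1-1 = m+q from by omega]
          rw [Nat.choose_succ_succ (m+q) m]
          have hs : ((-1 : ℝ)) ^ (k+m+1+k) = -((-1) ^ (k+m+k)) := by
            rw [show k+m+1+k = (k+m+k)+1 from by omega, pow_succ]; ring
          push_cast
          rw [hs]
          field_simp
          ring
        have hTA : (((-1 : ℝ) ^ (p + 1 + (p+1)) * (((p+1) + (q+1) - (p+1) - 1).choose ((p+1) - (p+1)) : ℝ)) /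
                (u ^ (p+1) * d ^ ((p+1) + (q+1) - (p+1)))) * d
            = ((-1 : ℝ) ^ (p + 1 + (p+1)) * (((p+1) + q - (p+1) - 1).choose ((p+1) - (p+1)) : ℝ)) /
                (u ^ (p+1) * d ^ ((p+1) + q - (p+1))) := by
          simp only [show (p+1)+(q+1)-(p+1)-1 = q from by omega,
            show (p+1)-(p+1) = 0 from by omega,
            show (p+1)+(q+1)-(p+1) = q+1 from by omega,
            show (p+1)+q-(p+1)-1 = q-1 from by omega,
            show (p+1)+q-(p+1) = q from by omega,
            Nat.choose_zero_right, Nat.cast_one, mul_one]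
          field_simp
          ring
        have hB : (∑ k ∈ Finset.Icc 1 q,
              ((-1 : ℝ) ^ (p+1) * (((p+1) + (q+1) - k - 1).choose ((q+1) - k) : ℝ)) /
                ((u + d) ^ k * d ^ ((p+1) + (q+1) - k))) * d
            = (∑ k ∈ Finset.Icc 1 q,
              ((-1 : ℝ) ^ (p+1) * (((p+1) + q - k - 1).choose (q - k) : ℝ)) /
                ((u + d) ^ k * d ^ ((p+1) + q - k)))
            - (∑ k ∈ Finset.Icc 1 q,
              ((-1 : ℝ) ^ p * ((p + (q+1) - k - 1).choose ((q+1) - k) : ℝ)) /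
                ((u + d) ^ k * d ^ (p + (q+1) - k))) := by
          rw [Finset.sum_mul, ← Finset.sum_sub_distrib]
          apply Finset.sum_congr rfl
          intro k hk
          obtain ⟨hk1, hk2⟩ := Finset.mem_Icc.mp hk
          obtain ⟨m, rfl⟩ : ∃ m, q = k + m := ⟨q - k, by omega⟩
          simp only [show p+1+(k+m+1)-k-1 = p+m+1 from by omega,
            show k+m+1-k = m+1 from by omega,
            show p+1+(k+m+1)-k = p+m+2 from by omega,
            show p+1+(k+m)-k-1 = p+m from by omega,
            show k+m-k = m from by omega,
            show p+1+(k+m)-k = p+m+1 from by omega,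
            show p+(k+m+1)-k-1 = p+m from by omega,
            show p+(k+m+1)-k = p+m+1 from by omega,
            show p+m+2-1 = p+m+1 from by omega,
            show p+m+1-1 = p+m from by omega]
          rw [Nat.choose_succ_succ (p+m) m]
          have hs : ((-1 : ℝ)) ^ (p+1) = -((-1) ^ p) := by rw [pow_succ]; ring
          push_cast
          rw [hs]
          field_simp
          ring
        have hTB : (((-1 : ℝ) ^ (p+1) * (((p+1) + (q+1) - (q+1) - 1).choose ((q+1) - (q+1)) : ℝ)) /
                ((u + d) ^ (q+1) * d ^ ((p+1) + (q+1) - (q+1)))) * d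
            = -(((-1 : ℝ) ^ p * ((p + (q+1) - (q+1) - 1).choose ((q+1) - (q+1)) : ℝ)) /
                ((u + d) ^ (q+1) * d ^ (p + (q+1) - (q+1)))) := by
          simp only [show (p+1)+(q+1)-(q+1)-1 = p from by omega,
            show (q+1)-(q+1) = 0 from by omega,
            show (p+1)+(q+1)-(q+1) = p+1 from by omega,
            show p+(q+1)-(q+1)-1 = p-1 from by omega,
            show p+(q+1)-(q+1) = p from by omega,
            Nat.choose_zero_right, Nat.cast_one, mul_one]
          have hs : ((-1 : ℝ)) ^ (p+1) = -((-1) ^ p) := by rw [pow_succ]; ring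
          rw [hs]
          field_simp
          ring
        linear_combination -hA - hTA - hB - hTB

theorem partial_fraction_decomposition
    (a b : ℕ) (ha : 1 ≤ a) (hb : 1 ≤ b) (x y : ℝ) (hxy : x ≠ y)
    (z : ℝ) (hzx : z ≠ -x) (hzy : z ≠ -y) :
    1 / ((z + x) ^ a * (z + y) ^ b) =
      (∑ k ∈ Finset.Icc 1 a,
        ((-1 : ℝ) ^ (a + k) * (Nat.choose (a + b - k - 1) (a - k) : ℝ)) /
          ((z + x) ^ k * (y - x) ^ (a + b - k))) +
      (∑ k ∈ Finset.Icc 1 b,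
        ((-1 : ℝ) ^ a * (Nat.choose (a + b - k - 1) (b - k) : ℝ)) /
          ((z + y) ^ k * (y - x) ^ (a + b - k))) := by
  have hu : z + x ≠ 0 := fun h => hzx (by linarith)
  have hv : z + y ≠ 0 := fun h => hzy (by linarith)
  have hd : y - x ≠ 0 := sub_ne_zero.mpr (Ne.symm hxy)
  have hveq : z + y = (z + x) + (y - x) := by ring
  have hkey := pf_key (z + x) (y - x) hu hd (by rw [← hveq]; exact hv) (a + b - 1) a b (by omega)
  rw [hveq]
  exact hkey
end

section
/- For complex numbers s, t with Re(s) > 1 and Re(t) > 1, the double zeta values satisfy Euler's reflection formula: ζ(s,t) + ζ(t,s) = ζ(s)ζ(t) − ζ(s+t), where ζ(s,t) = Σ_{m,n ≥ 1} 1/((m+n)^s n^t). -/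
open Complex

/-- The double zeta value `ζ(s,t) = Σ_{m,n ≥ 1} 1/((m+n)^s n^t)`. -/
noncomputable def doubleZeta (s t : ℂ) : ℂ :=
  ∑' m : ℕ, ∑' n : ℕ, 1 / (((m : ℂ) + 1 + ((n : ℂ) + 1)) ^ s * ((n : ℂ) + 1) ^ t)

theorem euler_reflection (s t : ℂ) (hs : 1 < s.re) (ht : 1 < t.re) :
    doubleZeta s t + doubleZeta t s =
      riemannZeta s * riemannZeta t - riemannZeta (s + t) := by
  classical
  set f : ℕ → ℂ := fun n => 1 / ((n : ℂ) + 1) ^ s with hf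
  set g : ℕ → ℂ := fun n => 1 / ((n : ℂ) + 1) ^ t with hg
  set F : ℕ × ℕ → ℂ := fun p => f p.1 * g p.2 with hFdef
  -- summability of f and g
  have key : ∀ u : ℂ, 1 < u.re → Summable (fun n : ℕ => 1 / ((n : ℂ) + 1) ^ u) := by
    intro u hu
    have h0 : Summable (fun n : ℕ => 1 / (n : ℂ) ^ u) :=
      Complex.summable_one_div_nat_cpow.mpr hu
    have h1 := h0.comp_injective (add_left_injective 1)
    refine h1.congr fun n => ?_
    simp only [Function.comp_apply]
    push_cast
    ring_nf
  have hfs : Summable f := key s hs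
  have hgs : Summable g := key t ht
  have hfn : Summable (fun n => ‖f n‖) := summable_norm_iff.mpr hfs
  have hgn : Summable (fun n => ‖g n‖) := summable_norm_iff.mpr hgs
  have hFsum : Summable F := summable_mul_of_summable_norm hfn hgn
  -- the three injections
  set e₁ : ℕ × ℕ → ℕ × ℕ := fun q => (q.1 + q.2 + 1, q.2) with he₁def
  set e₂ : ℕ × ℕ → ℕ × ℕ := fun q => (q.2, q.1 + q.2 + 1) with he₂def
  set d : ℕ → ℕ × ℕ := fun n => (n, n) with hddef
  have he₁ : Function.Injective e₁ := by
    intro a b h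
    simp only [he₁def, Prod.mk.injEq] at h
    obtain ⟨h1, h2⟩ := h
    exact Prod.ext (by omega) h2
  have he₂ : Function.Injective e₂ := by
    intro a b h
    simp only [he₂def, Prod.mk.injEq] at h
    obtain ⟨h1, h2⟩ := h
    exact Prod.ext (by omega) h1
  have hd : Function.Injective d := fun a b h => (Prod.mk.injEq _ _ _ _ ▸ h).1
  have hr₁ : Set.range e₁ = {p : ℕ × ℕ | p.2 < p.1} := by
    ext p
    constructor
    · rintro ⟨q, rfl⟩; simp [he₁def]
    · intro hp
      simp only [Set.mem_setOf_eq] at hp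
      exact ⟨(p.1 - p.2 - 1, p.2), by simp only [he₁def]; exact Prod.ext (by omega) rfl⟩
  have hr₂ : Set.range e₂ = {p : ℕ × ℕ | p.1 < p.2} := by
    ext p
    constructor
    · rintro ⟨q, rfl⟩; simp [he₂def]
    · intro hp
      simp only [Set.mem_setOf_eq] at hp
      exact ⟨(p.2 - p.1 - 1, p.1), by simp only [he₂def]; exact Prod.ext rfl (by omega)⟩
  have hrd : Set.range d = {p : ℕ × ℕ | p.1 = p.2} := by
    ext p
    constructor
    · rintro ⟨q, rfl⟩; simp [hddef]
    · intro hp; exact ⟨p.1, Prod.ext rfl hp⟩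
  -- indicators
  set S₁ : Set (ℕ × ℕ) := {p | p.2 < p.1} with hS₁
  set S₂ : Set (ℕ × ℕ) := {p | p.1 < p.2} with hS₂
  set S₃ : Set (ℕ × ℕ) := {p | p.1 = p.2} with hS₃
  have hdecomp : ∀ p, F p = S₁.indicator F p + S₂.indicator F p + S₃.indicator F p := by
    intro p
    rcases lt_trichotomy p.1 p.2 with h | h | h
    · rw [Set.indicator_of_notMem (by simp [hS₁]; omega),
        Set.indicator_of_mem (by simpa [hS₂]) F,
        Set.indicator_of_notMem (by simp [hS₃]; omega)]
      ring
    · rw [Set.indicator_of_notMem (by simp [hS₁]; omega),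
        Set.indicator_of_notMem (by simp [hS₂]; omega),
        Set.indicator_of_mem (by simpa [hS₃]) F]
      ring
    · rw [Set.indicator_of_mem (by simpa [hS₁]) F,
        Set.indicator_of_notMem (by simp [hS₂]; omega),
        Set.indicator_of_notMem (by simp [hS₃]; omega)]
      ring
  have h₁s : Summable (S₁.indicator F) := hFsum.indicator S₁
  have h₂s : Summable (S₂.indicator F) := hFsum.indicator S₂
  have h₃s : Summable (S₃.indicator F) := hFsum.indicator S₃
  have hsplit : ∑' p, F p =
      (∑' p, S₁.indicator F p) + (∑' p, S₂.indicator F p) + (∑' p, S₃.indicator F p) := by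
    calc ∑' p, F p = ∑' p, (S₁.indicator F p + S₂.indicator F p + S₃.indicator F p) :=
          tsum_congr hdecomp
      _ = (∑' p, (S₁.indicator F p + S₂.indicator F p)) + ∑' p, S₃.indicator F p :=
          Summable.tsum_add (h₁s.add h₂s) h₃s
      _ = (∑' p, S₁.indicator F p) + (∑' p, S₂.indicator F p) + ∑' p, S₃.indicator F p := by
          rw [Summable.tsum_add h₁s h₂s]
  -- identify the indicator sums
  have key₁ : ∀ (e : ℕ × ℕ → ℕ × ℕ) (S : Set (ℕ × ℕ)), Function.Injective e →
      Set.range e = S → ∑' p, S.indicator F p = ∑' q, F (e q) := by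
    intro e S he hre
    rw [← he.tsum_eq (f := S.indicator F) (by
      intro p hp
      rw [hre]
      exact Set.mem_of_indicator_ne_zero hp)]
    refine tsum_congr fun q => ?_
    rw [Set.indicator_of_mem (hre ▸ Set.mem_range_self q)]
  -- doubleZeta s t
  have hdz₁ : doubleZeta s t = ∑' q : ℕ × ℕ, F (e₁ q) := by
    have hsum : Summable (fun q : ℕ × ℕ => F (e₁ q)) := hFsum.comp_injective he₁
    rw [doubleZeta, Summable.tsum_prod' (f := fun q : ℕ × ℕ => F (e₁ q)) hsum (fun m => hsum.prod_factor m)]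
    refine tsum_congr fun m => tsum_congr fun n => ?_
    simp only [Function.comp_apply, he₁def, hFdef, hf, hg]
    rw [div_mul_div_comm, one_mul]
    congr 2
    push_cast
    ring
  have hdz₂ : doubleZeta t s = ∑' q : ℕ × ℕ, F (e₂ q) := by
    have hsum : Summable (fun q : ℕ × ℕ => F (e₂ q)) := hFsum.comp_injective he₂
    rw [doubleZeta, Summable.tsum_prod' (f := fun q : ℕ × ℕ => F (e₂ q)) hsum (fun m => hsum.prod_factor m)]
    refine tsum_congr fun m => tsum_congr fun n => ?_
    simp only [Function.comp_apply, he₂def, hFdef, hf, hg]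
    rw [div_mul_div_comm, one_mul, mul_comm]
    congr 2
    push_cast
    ring
  -- diagonal
  have hdiag : riemannZeta (s + t) = ∑' n : ℕ, F (d n) := by
    rw [zeta_eq_tsum_one_div_nat_add_one_cpow (by simp only [add_re]; linarith)]
    refine tsum_congr fun n => ?_
    simp only [hddef, hFdef, hf, hg]
    rw [div_mul_div_comm, one_mul, ← cpow_add _ _ (Nat.cast_add_one_ne_zero n)]
  -- product of zetas
  have hprod : riemannZeta s * riemannZeta t = ∑' p : ℕ × ℕ, F p := by
    rw [zeta_eq_tsum_one_div_nat_add_one_cpow hs, zeta_eq_tsum_one_div_nat_add_one_cpow ht]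
    exact tsum_mul_tsum_of_summable_norm hfn hgn
  rw [hdz₁, hdz₂, ← key₁ e₁ S₁ he₁ hr₁, ← key₁ e₂ S₂ he₂ hr₂, hprod, hsplit, hdiag]
  have hdiag' : ∑' p, S₃.indicator F p = ∑' n, F (d n) := by
    rw [← hd.tsum_eq (f := S₃.indicator F) (by
      intro p hp
      rw [hrd]
      exact Set.mem_of_indicator_ne_zero hp)]
    refine tsum_congr fun n => ?_
    rw [Set.indicator_of_mem (hrd ▸ Set.mem_range_self n)]
  rw [hdiag']
  ring
end

section
/- For real μ ≠ 0 and complex a₁, a₂ with Re(a₁) ≥ 1 and Re(a₂) ≥ 1, the integral G(μ) = ∫_ℝ du / ((u²+μ²)^{a₁} ((u+1)²+μ²)^{a₂}) equals (√π Γ(a₁+a₂−1/2)/(Γ(a₁)Γ(a₂))) ∫₀¹ dx x^{a₁−1}(1−x)^{a₂−1}/(μ² + x(1−x))^{a₁+a₂−1/2}. -/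
open MeasureTheory Set Complex Real


lemma cpow_pos_eq_exp {r : ℝ} (hr : 0 < r) (s : ℂ) :
    ((r : ℂ)) ^ s = Complex.exp (s * (Real.log r : ℝ)) := by
  rw [Complex.cpow_def_of_ne_zero (by exact_mod_cast hr.ne'), ← Complex.ofReal_log hr.le,
    mul_comm]

lemma ofReal_pos_eq_exp {r : ℝ} (hr : 0 < r) :
    ((r : ℝ) : ℂ) = Complex.exp ((Real.log r : ℝ) : ℂ) := by
  rw [← Complex.ofReal_exp, Real.exp_log hr]

lemma norm_aux {m c : ℝ} (hm : 0 < m) (hmc : m ≤ c) (s : ℂ) (hs : 2 ≤ s.re) (u : ℝ) :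
    ‖(((u^2 + c : ℝ)):ℂ)^(-s)‖ ≤ (m^(s.re-1) * min 1 m)⁻¹ * (1+u^2)⁻¹ := by
  have hpos : 0 < u^2 + c := by nlinarith [sq_nonneg u]
  rw [Complex.norm_cpow_eq_rpow_re_of_pos hpos, Complex.neg_re,
    Real.rpow_neg hpos.le, ← mul_inv]
  apply inv_anti₀
  · positivity
  have h1 : m^(s.re-1) ≤ (u^2+c)^(s.re-1) :=
    Real.rpow_le_rpow hm.le (by nlinarith [sq_nonneg u]) (by linarith)
  have h2 : min 1 m * (1+u^2) ≤ u^2 + c := by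
    have e1 : min 1 m ≤ m := min_le_right 1 m
    have e2 : min 1 m ≤ 1 := min_le_left 1 m
    have e3 : 0 ≤ min 1 m := le_min zero_le_one hm.le
    nlinarith [sq_nonneg u]
  calc m^(s.re-1) * min 1 m * (1+u^2) = m^(s.re-1) * (min 1 m * (1+u^2)) := by ring
    _ ≤ (u^2+c)^(s.re-1) * (u^2+c) := by
        apply mul_le_mul h1 h2 (by positivity) (by positivity)
    _ = (u^2+c)^(s.re) := by
        nth_rewrite 2 [← Real.rpow_one (u^2+c)]
        rw [← Real.rpow_add hpos]
        norm_num

lemma cont_aux (c : ℝ) (hc : 0 < c) (s : ℂ) :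
    Continuous (fun u : ℝ => (((u^2 + c : ℝ)):ℂ)^(-s)) := by
  apply Continuous.cpow
  · exact Complex.continuous_ofReal.comp (by continuity)
  · exact continuous_const
  · intro u
    left
    simp only [Complex.ofReal_re]
    nlinarith [sq_nonneg u]

lemma integrable_aux {m c : ℝ} (hm : 0 < m) (hmc : m ≤ c) (s : ℂ) (hs : 2 ≤ s.re) :
    Integrable (fun u : ℝ => (((u^2 + c : ℝ)):ℂ)^(-s)) := by
  apply Integrable.mono' (((integrable_inv_one_add_sq).const_mul ((m^(s.re-1) * min 1 m)⁻¹)))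
    ((cont_aux c (by linarith) s).aestronglyMeasurable)
  filter_upwards with u
  exact norm_aux hm hmc s hs u

lemma betaIoo (a b : ℂ) (ha : 0 < a.re) (hb : 0 < b.re) :
    ∫ x in Ioo (0:ℝ) 1, (x:ℂ)^(a-1) * (((1-x : ℝ)):ℂ)^(b-1)
      = Complex.Gamma a * Complex.Gamma b / Complex.Gamma (a+b) := by
  have hG : Complex.Gamma (a+b) ≠ 0 := by
    apply Complex.Gamma_ne_zero
    intro m h
    have h2 : (a+b).re = -(m:ℝ) := by rw [h]; simp
    simp only [Complex.add_re] at h2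
    have : (0:ℝ) ≤ (m:ℝ) := Nat.cast_nonneg m
    linarith
  have hbeta := Complex.Gamma_mul_Gamma_eq_betaIntegral ha hb
  have : Complex.betaIntegral a b = ∫ x in Ioo (0:ℝ) 1, (x:ℂ)^(a-1) * (((1-x : ℝ)):ℂ)^(b-1) := by
    rw [Complex.betaIntegral, intervalIntegral.integral_of_le zero_le_one,
      MeasureTheory.integral_Ioc_eq_integral_Ioo]
    apply setIntegral_congr_fun measurableSet_Ioo
    intro x hx
    push_cast
    ring_nf
  rw [this] at hbeta
  rw [eq_div_iff hG, mul_comm _ (Complex.Gamma (a+b)), hbeta]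

lemma integral_u (c : ℝ) (hc : 0 < c) (s : ℂ) (hs : 2 ≤ s.re) :
    (∫ u : ℝ, (((u^2 + c : ℝ)):ℂ)^(-s))
      = ((Real.sqrt π : ℝ):ℂ) * Complex.Gamma (s - 1/2) / Complex.Gamma s *
          ((c:ℝ):ℂ)^((1/2 : ℂ) - s) := by
  have hint := integrable_aux hc (le_refl c) s hs
  -- step 1: reduce to Ioi 0
  have heven : (∫ u : ℝ, (((u^2 + c : ℝ)):ℂ)^(-s))
      = 2 * ∫ u in Ioi (0:ℝ), (((u^2 + c : ℝ)):ℂ)^(-s) := by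
    rw [← intervalIntegral.integral_Iic_add_Ioi (b := (0:ℝ)) hint.integrableOn hint.integrableOn]
    have : (∫ u in Iic (0:ℝ), (((u^2 + c : ℝ)):ℂ)^(-s))
        = ∫ u in Ioi (0:ℝ), (((u^2 + c : ℝ)):ℂ)^(-s) := by
      have := integral_comp_neg_Iic (0:ℝ)
        (fun u : ℝ => (((u^2 + c : ℝ)):ℂ)^(-s))
      rw [neg_zero] at this
      rw [← this]
      apply setIntegral_congr_fun measurableSet_Iic
      intro u _
      norm_num
    rw [this]
    ring
  rw [heven]
  set w : ℝ → ℝ := fun x => c*x/(1-x) with hw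
  set f : ℝ → ℝ := fun x => Real.sqrt (w x) with hf
  set f' : ℝ → ℝ := fun x => c/((1-x)^2 * (2*Real.sqrt (w x))) with hf'
  have hwpos : ∀ x ∈ Ioo (0:ℝ) 1, 0 < w x := by
    intro x hx
    exact div_pos (mul_pos hc hx.1) (by linarith [hx.2])
  have hderiv : ∀ x ∈ Ioo (0:ℝ) 1, HasDerivWithinAt f (f' x) (Ioo 0 1) x := by
    intro x hx
    have hx1 : (0:ℝ) < 1 - x := by linarith [hx.2]
    have hwx := hwpos x hx
    have hw' : HasDerivAt w (c/(1-x)^2) x := by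
      have h1 : HasDerivAt (fun x : ℝ => c*x) c x := by
        simpa using (hasDerivAt_id x).const_mul c
      have h2 : HasDerivAt (fun x : ℝ => 1-x) (-1) x := by
        simpa using ((hasDerivAt_id x).const_sub 1)
      have := h1.div h2 hx1.ne'
      refine this.congr_deriv ?_
      symm
      field_simp
      ring
    have hs' := (Real.hasDerivAt_sqrt hwx.ne').comp x hw'
    refine hs'.hasDerivWithinAt.congr_deriv ?_
    symm
    simp only [hf', Function.comp]
    rw [div_mul_div_comm, one_mul, mul_comm]
  have himg : f '' Ioo (0:ℝ) 1 = Ioi (0:ℝ) := by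
    ext u
    constructor
    · rintro ⟨x, hx, rfl⟩
      exact Real.sqrt_pos.mpr (hwpos x hx)
    · intro hu
      have hu0 : 0 < u := hu
      have hden : 0 < u^2 + c := by positivity
      refine ⟨u^2/(u^2+c), ⟨div_pos (by positivity) hden, by rw [div_lt_one hden]; linarith⟩, ?_⟩
      have h1 : 1 - u^2/(u^2+c) = c/(u^2+c) := by
        field_simp
        ring
      have h2 : w (u^2/(u^2+c)) = u^2 := by
        simp only [hw, h1]
        field_simp
      simp only [hf, h2]
      exact Real.sqrt_sq hu0.le
  have hinj : InjOn f (Ioo (0:ℝ) 1) := by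
    intro x hx y hy hxy
    have hwx := hwpos x hx
    have hwy := hwpos y hy
    have hsq : w x = w y := by
      have := congrArg (fun t => t^2) hxy
      simpa [hf, Real.sq_sqrt hwx.le, Real.sq_sqrt hwy.le] using this
    simp only [hw] at hsq
    have hx1 : (0:ℝ) < 1 - x := by linarith [hx.2]
    have hy1 : (0:ℝ) < 1 - y := by linarith [hy.2]
    rw [div_eq_div_iff hx1.ne' hy1.ne'] at hsq
    have : c * x = c * y := by nlinarith [hsq]
    exact mul_left_cancel₀ hc.ne' this
  rw [← himg, integral_image_eq_integral_abs_deriv_smul measurableSet_Ioo hderiv hinj,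
    MeasureTheory.setIntegral_congr_fun
      (g := fun x : ℝ => (((1/2:ℝ)):ℂ) * ((c:ℝ):ℂ)^((1/2 : ℂ) - s) *
        ((x:ℂ)^((1/2:ℂ)-1) * (((1-x:ℝ)):ℂ)^((s-1/2)-1)))
      measurableSet_Ioo ?_, MeasureTheory.integral_const_mul,
    betaIoo (1/2) (s-1/2) (by norm_num) (by simp [Complex.sub_re]; norm_num; linarith)]
  · have hGhalf : Complex.Gamma (1/2) = ((Real.sqrt π : ℝ):ℂ) := by
      rw [show ((1:ℂ)/2) = ((1/2 : ℝ) : ℂ) by norm_num, Complex.Gamma_ofReal,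
        Real.Gamma_one_half_eq]
    have harg : (1/2 : ℂ) + (s - 1/2) = s := by ring
    rw [harg, hGhalf]
    push_cast
    ring
  · intro x hx
    dsimp only
    have hx0 : 0 < x := hx.1
    have hx1 : (0:ℝ) < 1 - x := by linarith [hx.2]
    have hwx := hwpos x hx
    have hsq : (f x)^2 = c*x/(1-x) := Real.sq_sqrt hwx.le
    have h2 : (f x)^2 + c = c/(1-x) := by
      rw [hsq]
      field_simp
      ring
    have hf'pos : 0 < f' x := by
      simp only [hf']
      have : 0 < Real.sqrt (w x) := Real.sqrt_pos.mpr hwx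
      positivity
    have habs : |f' x| = c/((1-x)^2 * (2*Real.sqrt (w x))) := abs_of_pos hf'pos
    rw [habs, h2, Complex.real_smul,
      ofReal_pos_eq_exp (show (0:ℝ) < c/((1-x)^2 * (2*Real.sqrt (w x))) by
        have : 0 < Real.sqrt (w x) := Real.sqrt_pos.mpr hwx
        positivity),
      cpow_pos_eq_exp (show (0:ℝ) < c/(1-x) from div_pos hc hx1),
      ofReal_pos_eq_exp (show (0:ℝ) < (1/2:ℝ) by norm_num),
      cpow_pos_eq_exp hc, cpow_pos_eq_exp hx0, cpow_pos_eq_exp hx1]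
    simp only [← Complex.exp_add]
    congr 1
    rw [Real.log_div hc.ne' (by positivity : ((1-x)^2 * (2*Real.sqrt (w x))) ≠ 0),
      Real.log_div hc.ne' hx1.ne',
      Real.log_mul (by positivity) (by
        have : 0 < Real.sqrt (w x) := Real.sqrt_pos.mpr hwx
        positivity),
      Real.log_mul (two_ne_zero) (Real.sqrt_pos.mpr hwx).ne',
      Real.log_sqrt hwx.le, Real.log_pow]
    simp only [hw]
    rw [Real.log_div (mul_pos hc hx0).ne' hx1.ne', Real.log_mul hc.ne' hx0.ne',
      one_div, Real.log_inv]
    push_cast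
    ring

lemma beta_feynman (A B : ℝ) (hA : 0 < A) (hB : 0 < B) (a b : ℂ)
    (ha : 0 < a.re) (hb : 0 < b.re) :
    ∫ x in Ioo (0:ℝ) 1, (x:ℂ)^(a-1) * (((1-x : ℝ)):ℂ)^(b-1) *
      (((x*A + (1-x)*B : ℝ)):ℂ)^(-(a+b))
    = (A:ℂ)^(-a) * (B:ℂ)^(-b) * (Complex.Gamma a * Complex.Gamma b / Complex.Gamma (a+b)) := by
  set D : ℝ → ℝ := fun t => t*B + (1-t)*A with hD
  have hDpos : ∀ t ∈ Icc (0:ℝ) 1, 0 < D t := by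
    intro t ht
    rcases ht with ⟨h0, h1⟩
    simp only [hD]
    rcases lt_or_ge t 1 with h | h
    · have h3 : 0 ≤ t*B := mul_nonneg h0 hB.le
      have h4 : 0 < (1-t)*A := mul_pos (by linarith) hA
      linarith
    · have : t = 1 := le_antisymm h1 h
      subst this
      simpa using hB
  set f : ℝ → ℝ := fun t => t*B / D t with hf
  set f' : ℝ → ℝ := fun t => A*B / (D t)^2 with hf'
  have hderiv : ∀ t ∈ Ioo (0:ℝ) 1, HasDerivWithinAt f (f' t) (Ioo 0 1) t := by
    intro t ht
    have hDt : D t ≠ 0 := (hDpos t (Ioo_subset_Icc_self ht)).ne'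
    have h1 : HasDerivAt (fun t : ℝ => t*B) B t := by
      simpa using (hasDerivAt_id t).mul_const B
    have h2 : HasDerivAt D (B - A) t := by
      have : HasDerivAt (fun t : ℝ => t*B + (1-t)*A) (B + (-1)*A) t := by
        apply HasDerivAt.add h1
        simpa using ((hasDerivAt_id t).const_sub 1).mul_const A
      simpa [hD, sub_eq_add_neg, neg_mul] using this
    have := h1.div h2 hDt
    refine this.hasDerivWithinAt.congr_deriv ?_
    symm
    simp only [hf', hD]
    field_simp
    ring
  have himg : f '' Ioo (0:ℝ) 1 = Ioo (0:ℝ) 1 := by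
    ext y
    constructor
    · rintro ⟨t, ht, rfl⟩
      have hDt := hDpos t (Ioo_subset_Icc_self ht)
      constructor
      · exact div_pos (mul_pos ht.1 hB) hDt
      · rw [div_lt_one hDt]
        have : 0 < (1-t)*A := mul_pos (by linarith [ht.2]) hA
        simp only [hD]
        linarith
    · intro hy
      refine ⟨y*A / (y*A + (1-y)*B), ?_, ?_⟩
      · have hden : 0 < y*A + (1-y)*B := by
          have : 0 < y*A := mul_pos hy.1 hA
          have : 0 < (1-y)*B := mul_pos (by linarith [hy.2]) hB
          nlinarith [mul_pos hy.1 hA]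
        constructor
        · exact div_pos (mul_pos hy.1 hA) hden
        · rw [div_lt_one hden]
          have : 0 < (1-y)*B := mul_pos (by linarith [hy.2]) hB
          linarith
      · have hden : 0 < y*A + (1-y)*B := by
          have h1 : 0 < y*A := mul_pos hy.1 hA
          have h2 : 0 < (1-y)*B := mul_pos (by linarith [hy.2]) hB
          linarith
        simp only [hf, hD]
        field_simp
        have hAB : y * B + (y * A + (1 - y) * B - y * A) = B := by ring
        rw [hAB]
        field_simp
  have hinj : InjOn f (Ioo (0:ℝ) 1) := by
    intro s hs t ht hst
    have hDs := (hDpos s (Ioo_subset_Icc_self hs)).ne'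
    have hDt := (hDpos t (Ioo_subset_Icc_self ht)).ne'
    simp only [hf] at hst
    rw [div_eq_div_iff hDs hDt] at hst
    simp only [hD] at hst
    have : s * B * A = t * B * A := by nlinarith [hst]
    have hBA : 0 < B * A := mul_pos hB hA
    nlinarith [this]
  rw [← himg, integral_image_eq_integral_abs_deriv_smul measurableSet_Ioo hderiv hinj,
    MeasureTheory.setIntegral_congr_fun
      (g := fun t : ℝ => ((A:ℂ)^(-a) * (B:ℂ)^(-b)) * ((t:ℂ)^(a-1) * (((1-t:ℝ)):ℂ)^(b-1)))
      measurableSet_Ioo ?_, MeasureTheory.integral_const_mul, betaIoo a b ha hb]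
  intro t ht
  dsimp only
  have hDt : 0 < D t := hDpos t (Ioo_subset_Icc_self ht)
  have ht0 : 0 < t := ht.1
  have ht1 : 0 < 1 - t := by linarith [ht.2]
  have hft : f t = t*B/D t := rfl
  have h1 : 1 - t*B/D t = (1-t)*A / D t := by
    rw [eq_div_iff hDt.ne', sub_mul, div_mul_cancel₀ _ hDt.ne']
    simp only [hD]
    ring
  have h2 : t*B/D t * A + (1 - t)*A/D t * B = A*B / D t := by
    rw [div_mul_eq_mul_div, div_mul_eq_mul_div, ← add_div]
    congr 1
    ring
  have h3 : |f' t| = A*B/(D t)^2 := by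
    have : 0 < A*B/(D t)^2 := div_pos (mul_pos hA hB) (pow_pos hDt 2)
    rw [abs_of_pos this]
  have hq1 : 0 < t*B/D t := div_pos (mul_pos ht0 hB) hDt
  have hq2 : 0 < (1-t)*A/D t := div_pos (mul_pos ht1 hA) hDt
  have hq3 : 0 < A*B/D t := div_pos (mul_pos hA hB) hDt
  have hq4 : 0 < A*B/(D t)^2 := div_pos (mul_pos hA hB) (pow_pos hDt 2)
  rw [h3, hft, h1, h2, Complex.real_smul,
    ofReal_pos_eq_exp hq4, cpow_pos_eq_exp hq1, cpow_pos_eq_exp hq2, cpow_pos_eq_exp hq3,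
    cpow_pos_eq_exp hA, cpow_pos_eq_exp hB, cpow_pos_eq_exp ht0, cpow_pos_eq_exp ht1]
  simp only [← Complex.exp_add]
  congr 1
  rw [Real.log_div (mul_pos hA hB).ne' (pow_pos hDt 2).ne',
    Real.log_div (mul_pos ht0 hB).ne' hDt.ne',
    Real.log_div (mul_pos ht1 hA).ne' hDt.ne',
    Real.log_div (mul_pos hA hB).ne' hDt.ne',
    Real.log_mul hA.ne' hB.ne', Real.log_mul ht0.ne' hB.ne',
    Real.log_mul ht1.ne' hA.ne', Real.log_pow]
  push_cast
  ring

theorem G_integral_representation (μ : ℝ) (hμ : μ ≠ 0)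
    (a₁ a₂ : ℂ) (ha₁ : 1 ≤ a₁.re) (ha₂ : 1 ≤ a₂.re) :
    (∫ u : ℝ, 1 / ((((u ^ 2 + μ ^ 2 : ℝ)) : ℂ) ^ a₁ *
        ((((u + 1) ^ 2 + μ ^ 2 : ℝ)) : ℂ) ^ a₂)) =
      ((Real.sqrt π : ℂ) * Complex.Gamma (a₁ + a₂ - 1 / 2) /
          (Complex.Gamma a₁ * Complex.Gamma a₂)) *
        ∫ x in (0 : ℝ)..1,
          ((x : ℂ)) ^ (a₁ - 1) * (((1 - x : ℝ) : ℂ)) ^ (a₂ - 1) /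
            (((μ ^ 2 + x * (1 - x) : ℝ)) : ℂ) ^ (a₁ + a₂ - 1 / 2) := by
  have hμ2 : (0:ℝ) < μ^2 := by positivity
  set s : ℂ := a₁ + a₂ with hsdef
  have hsre : s.re = a₁.re + a₂.re := by rw [hsdef, Complex.add_re]
  have hs : 2 ≤ s.re := by rw [hsre]; linarith
  have ha₁' : 0 < a₁.re := by linarith
  have ha₂' : 0 < a₂.re := by linarith
  have hG1 : Complex.Gamma a₁ ≠ 0 := Complex.Gamma_ne_zero_of_re_pos ha₁'
  have hG2 : Complex.Gamma a₂ ≠ 0 := Complex.Gamma_ne_zero_of_re_pos ha₂'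
  have hGs : Complex.Gamma s ≠ 0 := Complex.Gamma_ne_zero_of_re_pos (by linarith)
  have hA : ∀ u:ℝ, (0:ℝ) < u^2+μ^2 := fun u => by positivity
  have hB : ∀ u:ℝ, (0:ℝ) < (u+1)^2+μ^2 := fun u => by positivity
  set F : ℝ → ℝ → ℂ := fun u x => (x:ℂ)^(a₁-1) * (((1-x:ℝ)):ℂ)^(a₂-1) *
      (((x*(u^2+μ^2) + (1-x)*((u+1)^2+μ^2) : ℝ)):ℂ)^(-s) with hF
  have step1 : ∀ u : ℝ, 1 / ((((u ^ 2 + μ ^ 2 : ℝ)) : ℂ) ^ a₁ *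
        ((((u + 1) ^ 2 + μ ^ 2 : ℝ)) : ℂ) ^ a₂)
      = (Complex.Gamma s / (Complex.Gamma a₁ * Complex.Gamma a₂)) *
          ∫ x in Ioo (0:ℝ) 1, F u x := by
    intro u
    have hbf := beta_feynman (u^2+μ^2) ((u+1)^2+μ^2) (hA u) (hB u) a₁ a₂ ha₁' ha₂'
    rw [← hsdef] at hbf
    have hXne : (((u^2+μ^2 : ℝ)):ℂ) ^ a₁ ≠ 0 := by
      rw [cpow_pos_eq_exp (hA u)]; exact Complex.exp_ne_zero _
    have hYne : ((((u+1)^2+μ^2 : ℝ)):ℂ) ^ a₂ ≠ 0 := by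
      rw [cpow_pos_eq_exp (hB u)]; exact Complex.exp_ne_zero _
    simp only [hF]
    rw [hbf, Complex.cpow_neg, Complex.cpow_neg]
    field_simp
  simp only [step1]
  rw [MeasureTheory.integral_const_mul]
  -- Fubini
  have hmeq : (volume : Measure ℝ).prod ((volume : Measure ℝ).restrict (Ioo 0 1))
      = ((volume : Measure ℝ).prod (volume : Measure ℝ)).restrict (univ ×ˢ Ioo 0 1) := by
    rw [← Measure.prod_restrict, Measure.restrict_univ]
  have hbase : ∀ u x : ℝ, x*(u^2+μ^2) + (1-x)*((u+1)^2+μ^2)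
      = (u+(1-x))^2 + (μ^2 + x*(1-x)) := by intro u x; ring
  have hFint : Integrable (Function.uncurry F)
      ((volume : Measure ℝ).prod ((volume : Measure ℝ).restrict (Ioo 0 1))) := by
    set K : ℝ := ((μ^2)^(s.re-1) * min 1 (μ^2))⁻¹ with hK
    have hKpos : 0 < K := by
      rw [hK]
      have h1 : (0:ℝ) < (μ^2)^(s.re-1) := Real.rpow_pos_of_pos hμ2 _
      have h2 : (0:ℝ) < min 1 (μ^2) := lt_min one_pos hμ2
      positivity
    have hbound : ∀ u : ℝ, ∀ x ∈ Ioo (0:ℝ) 1, ‖F u x‖ ≤ (5*K) * (1+u^2)⁻¹ * 1 := by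
      intro u x hx
      have hx0 : 0 < x := hx.1
      have hx1 : (0:ℝ) < 1 - x := by linarith [hx.2]
      have hcx : μ^2 ≤ μ^2 + x*(1-x) := by nlinarith
      simp only [hF, norm_mul, mul_one]
      have n1 : ‖(x:ℂ)^(a₁-1)‖ ≤ 1 := by
        rw [Complex.norm_cpow_eq_rpow_re_of_pos hx0]
        apply Real.rpow_le_one hx0.le (by linarith [hx.2])
        simp only [Complex.sub_re, Complex.one_re]; linarith
      have n2 : ‖(((1-x:ℝ)):ℂ)^(a₂-1)‖ ≤ 1 := by
        rw [Complex.norm_cpow_eq_rpow_re_of_pos hx1]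
        apply Real.rpow_le_one hx1.le (by linarith [hx.1])
        simp only [Complex.sub_re, Complex.one_re]; linarith
      have n3 : ‖(((x*(u^2+μ^2) + (1-x)*((u+1)^2+μ^2) : ℝ)):ℂ)^(-s)‖ ≤ (5*K) * (1+u^2)⁻¹ := by
        rw [hbase u x]
        calc ‖((((u+(1-x))^2 + (μ^2 + x*(1-x)) : ℝ)):ℂ)^(-s)‖
            ≤ K * (1+(u+(1-x))^2)⁻¹ := norm_aux hμ2 hcx s hs (u+(1-x))
          _ ≤ (5*K) * (1+u^2)⁻¹ := by
              have h5 : 1+u^2 ≤ 5*(1+(u+(1-x))^2) := by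
                nlinarith [sq_nonneg (2*u + 5/2*(1-x)), sq_nonneg (1-x), hx.1, hx.2]
              have hp1 : (0:ℝ) < 1+(u+(1-x))^2 := by positivity
              have hp2 : (0:ℝ) < 1+u^2 := by positivity
              rw [show (5*K) * (1+u^2)⁻¹ = K * (5 * (1+u^2)⁻¹) by ring]
              apply mul_le_mul_of_nonneg_left _ hKpos.le
              rw [show (5:ℝ) * (1+u^2)⁻¹ = ((1+u^2)/5)⁻¹ by rw [inv_div]; ring]
              apply inv_anti₀ (by positivity)
              rw [div_le_iff₀ (by norm_num : (0:ℝ) < 5)]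
              linarith [h5]
      calc ‖(x:ℂ)^(a₁-1)‖ * ‖(((1-x:ℝ)):ℂ)^(a₂-1)‖ *
            ‖(((x*(u^2+μ^2) + (1-x)*((u+1)^2+μ^2) : ℝ)):ℂ)^(-s)‖
          ≤ 1 * 1 * ((5*K) * (1+u^2)⁻¹) := by
            apply mul_le_mul (mul_le_mul n1 n2 (norm_nonneg _) one_pos.le) n3
              (norm_nonneg _) (by norm_num)
        _ = (5*K) * (1+u^2)⁻¹ := by ring
    have hgint : Integrable (fun z : ℝ × ℝ => ((5*K) * (1+z.1^2)⁻¹) * (1:ℝ))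
        ((volume : Measure ℝ).prod ((volume : Measure ℝ).restrict (Ioo 0 1))) := by
      apply Integrable.mul_prod (f := fun u : ℝ => 5*K*(1+u^2)⁻¹) (g := fun _ : ℝ => (1:ℝ))
        (integrable_inv_one_add_sq.const_mul (5*K))
      rw [← IntegrableOn]
      apply (integrableOn_const_iff (C := (1:ℝ))).mpr
      right
      rw [Real.volume_Ioo]
      exact ENNReal.ofReal_lt_top
    apply Integrable.mono' hgint
    · -- AEStronglyMeasurable
      rw [hmeq]
      have hcont : Measurable (fun p : ℝ × ℝ =>
          Complex.exp ((a₁-1) * ((Real.log p.2 : ℝ):ℂ)) *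
          Complex.exp ((a₂-1) * ((Real.log (1-p.2) : ℝ):ℂ)) *
          Complex.exp ((-s) * ((Real.log (p.2*(p.1^2+μ^2) + (1-p.2)*((p.1+1)^2+μ^2)) : ℝ):ℂ))) := by
        apply Measurable.mul
        apply Measurable.mul
        · exact Complex.measurable_exp.comp ((measurable_const.mul
            (Complex.measurable_ofReal.comp (Real.measurable_log.comp measurable_snd))))
        · exact Complex.measurable_exp.comp ((measurable_const.mul
            (Complex.measurable_ofReal.comp (Real.measurable_log.comp
              (measurable_const.sub measurable_snd)))))
        · apply Complex.measurable_exp.comp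
          apply measurable_const.mul
          apply Complex.measurable_ofReal.comp
          apply Real.measurable_log.comp
          apply Measurable.add
          · exact measurable_snd.mul ((measurable_fst.pow measurable_const).add measurable_const)
          · exact (measurable_const.sub measurable_snd).mul
              (((measurable_fst.add measurable_const).pow measurable_const).add measurable_const)
      apply (hcont.aestronglyMeasurable).congr
      rw [Filter.EventuallyEq, ae_restrict_iff' (MeasurableSet.univ.prod measurableSet_Ioo)]
      filter_upwards with p hp
      obtain ⟨-, hp2⟩ := hp
      have hx0 : 0 < p.2 := hp2.1
      have hx1 : (0:ℝ) < 1 - p.2 := by linarith [hp2.2]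
      have hbpos : 0 < p.2*(p.1^2+μ^2) + (1-p.2)*((p.1+1)^2+μ^2) := by
        rw [hbase p.1 p.2]; nlinarith [sq_nonneg (p.1+(1-p.2))]
      simp only [Function.uncurry, hF]
      rw [cpow_pos_eq_exp hx0, cpow_pos_eq_exp hx1, cpow_pos_eq_exp hbpos]
    · -- norm bound a.e.
      rw [hmeq, ae_restrict_iff' (MeasurableSet.univ.prod measurableSet_Ioo)]
      filter_upwards with p hp
      obtain ⟨-, hp2⟩ := hp
      simpa [Function.uncurry] using hbound p.1 p.2 hp2
  rw [MeasureTheory.integral_integral_swap hFint]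
  -- inner integral
  have step3 : ∀ x ∈ Ioo (0:ℝ) 1, (∫ u : ℝ, F u x)
      = (((Real.sqrt π : ℝ):ℂ) * Complex.Gamma (s - 1/2) / Complex.Gamma s) *
        ((x:ℂ)^(a₁-1) * (((1-x:ℝ)):ℂ)^(a₂-1) * (((μ^2 + x*(1-x) : ℝ)):ℂ)^((1/2:ℂ) - s)) := by
    intro x hx
    have hx0 : 0 < x := hx.1
    have hx1 : (0:ℝ) < 1 - x := by linarith [hx.2]
    have hc : (0:ℝ) < μ^2 + x*(1-x) := by nlinarith
    have hh : ∀ u : ℝ, F u x = ((x:ℂ)^(a₁-1) * (((1-x:ℝ)):ℂ)^(a₂-1)) *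
        (fun v : ℝ => (((v^2 + (μ^2 + x*(1-x)) : ℝ)):ℂ)^(-s)) (u + (1-x)) := by
      intro u
      simp only [hF]
      rw [hbase u x]
    calc (∫ u : ℝ, F u x)
        = ∫ u : ℝ, ((x:ℂ)^(a₁-1) * (((1-x:ℝ)):ℂ)^(a₂-1)) *
            (fun v : ℝ => (((v^2 + (μ^2 + x*(1-x)) : ℝ)):ℂ)^(-s)) (u + (1-x)) := by
          congr 1; funext u; exact hh u
      _ = ((x:ℂ)^(a₁-1) * (((1-x:ℝ)):ℂ)^(a₂-1)) *
            ∫ u : ℝ, (fun v : ℝ => (((v^2 + (μ^2 + x*(1-x)) : ℝ)):ℂ)^(-s)) (u + (1-x)) :=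
          MeasureTheory.integral_const_mul _ _
      _ = ((x:ℂ)^(a₁-1) * (((1-x:ℝ)):ℂ)^(a₂-1)) *
            ∫ v : ℝ, (((v^2 + (μ^2 + x*(1-x)) : ℝ)):ℂ)^(-s) := by
          rw [MeasureTheory.integral_add_right_eq_self
            (fun v : ℝ => (((v^2 + (μ^2 + x*(1-x)) : ℝ)):ℂ)^(-s)) (1-x)]
      _ = _ := by
          rw [integral_u (μ^2 + x*(1-x)) hc s hs]
          ring
  rw [MeasureTheory.setIntegral_congr_fun measurableSet_Ioo step3,
    MeasureTheory.integral_const_mul]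
  -- now rewrite RHS
  rw [intervalIntegral.integral_of_le zero_le_one, MeasureTheory.integral_Ioc_eq_integral_Ioo]
  rw [MeasureTheory.setIntegral_congr_fun (μ := volume)
    (f := fun x : ℝ => ((x : ℂ)) ^ (a₁ - 1) * (((1 - x : ℝ) : ℂ)) ^ (a₂ - 1) /
            (((μ ^ 2 + x * (1 - x) : ℝ)) : ℂ) ^ (a₁ + a₂ - 1 / 2))
    (g := fun x : ℝ => (x:ℂ)^(a₁-1) * (((1-x:ℝ)):ℂ)^(a₂-1) *
            (((μ^2 + x*(1-x) : ℝ)):ℂ)^((1/2:ℂ) - s))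
    measurableSet_Ioo ?_]
  · rw [← mul_assoc]
    congr 1
    field_simp
  · intro x hx
    dsimp only
    rw [div_eq_mul_inv, ← Complex.cpow_neg]
    congr 1
    rw [hsdef]
    ring
end

section
/- For every integer p ≥ 0, the numbers φ_ℓ = −(2ℓ+2) E_{2ℓ+1}(0) satisfy Σ_{ℓ=0}^{p} (φ_ℓ/(2ℓ+2)) · C(2p+2, 2ℓ+1) = 1, where C denotes the binomial coefficient and E_n the Euler polynomials. -/
open PowerSeries

private lemma sum_split_even_odd (b : ℕ → ℚ) (hb0 : b 0 = 1)
    (hbe : ∀ j, 1 ≤ j → b (2 * j) = 0) (p : ℕ) :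
    ∑ k ∈ Finset.range (2 * p + 3), b k =
      1 + ∑ ℓ ∈ Finset.range (p + 1), b (2 * ℓ + 1) := by
  induction p with
  | zero =>
      have h2 : b 2 = 0 := by simpa using hbe 1 le_rfl
      simp [Finset.sum_range_succ, hb0, h2]
  | succ p ih =>
      have h3 : 2 * (p + 1) + 3 = (2 * p + 3) + 1 + 1 := by ring
      have h4 : 2 * p + 3 + 1 = 2 * (p + 2) := by ring
      rw [h3, Finset.sum_range_succ, Finset.sum_range_succ, ih, h4,
        hbe (p + 2) (by omega)]
      have h5 : 2 * p + 3 = 2 * (p + 1) + 1 := by ring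
      rw [h5]
      conv_rhs => rw [Finset.sum_range_succ]
      ring

theorem phi_coeff_binomial_identity
    (E : ℕ → Polynomial ℚ)
    -- Euler polynomials, defined via `2 e^{xt}/(e^x+1) = Σ_n E_n(t) x^n/n!`:
    (hE : ∀ t : ℚ,
      (PowerSeries.exp ℚ + 1) *
          PowerSeries.mk (fun n => (E n).eval t / (n.factorial : ℚ)) =
        PowerSeries.mk (fun n => 2 * t ^ n / (n.factorial : ℚ)))
    (p : ℕ) :
    ∑ ℓ ∈ Finset.range (p + 1),
        ((-(2 * (ℓ : ℚ) + 2) * (E (2 * ℓ + 1)).eval 0) / (2 * (ℓ : ℚ) + 2)) *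
          (Nat.choose (2 * p + 2) (2 * ℓ + 1) : ℚ) = 1 := by
  set a : ℕ → ℚ := fun n => (E n).eval 0 with ha
  set F : ℚ⟦X⟧ := PowerSeries.mk (fun n => a n / (n.factorial : ℚ)) with hFdef
  set G : ℚ⟦X⟧ := PowerSeries.mk (fun n => (E n).eval 1 / (n.factorial : ℚ)) with hGdef
  have hne : (exp ℚ + 1 : ℚ⟦X⟧) ≠ 0 := by
    intro h
    have := congrArg constantCoeff h
    simp [constantCoeff_exp] at this
  have hcoeff2 : ∀ n : ℕ, (coeff n) (2 : ℚ⟦X⟧) = if n = 0 then 2 else 0 := by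
    intro n
    rw [show (2 : ℚ⟦X⟧) = C 2 from (map_ofNat C 2).symm, coeff_C]
  -- (exp + 1) * F = 2
  have h1 : (exp ℚ + 1) * F = 2 := by
    have h := hE 0
    rw [hFdef, ha, h]
    ext n
    rw [coeff_mk, hcoeff2]
    cases n with
    | zero => norm_num
    | succ k =>
        rw [zero_pow (Nat.succ_ne_zero k)]
        simp
  -- (exp + 1) * G = 2 * exp
  have h2 : (exp ℚ + 1) * G = 2 * exp ℚ := by
    have h := hE 1
    rw [hGdef, h]
    ext n
    rw [coeff_mk, show (2 : ℚ⟦X⟧) = C 2 from (map_ofNat C 2).symm,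
      coeff_C_mul, coeff_exp]
    simp [mul_div_assoc, div_eq_mul_inv]
  -- F + G = 2
  have hFG : F + G = 2 := by
    have h : (exp ℚ + 1) * (F + G) = (exp ℚ + 1) * 2 := by
      rw [mul_add, h1, h2]; ring
    exact mul_left_cancel₀ hne h
  -- evalNegHom F = G
  have hneg : evalNegHom F = G := by
    have h3 : (evalNegHom (exp ℚ) + 1) * evalNegHom F = 2 := by
      have h := congrArg evalNegHom h1
      simpa [map_mul, map_add, map_ofNat] using h
    have h4 : (exp ℚ + 1) * evalNegHom F = (exp ℚ + 1) * G := by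
      calc (exp ℚ + 1) * evalNegHom F
          = (exp ℚ * evalNegHom (exp ℚ) + exp ℚ) * evalNegHom F := by
            rw [exp_mul_exp_neg_eq_one]; ring
        _ = exp ℚ * ((evalNegHom (exp ℚ) + 1) * evalNegHom F) := by ring
        _ = (exp ℚ + 1) * G := by rw [h3, h2]; ring
    exact mul_left_cancel₀ hne h4
  have heven : ∀ n : ℕ, Even n → a n = if n = 0 then 1 else 0 := by
    intro n hn
    have hc1 : (-1 : ℚ) ^ n * (a n / n.factorial) = (E n).eval 1 / n.factorial := by
      have := congrArg (coeff n) hneg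
      simpa [PowerSeries.evalNegHom, coeff_rescale, hFdef, hGdef, coeff_mk] using this
    have hc2 : a n / n.factorial + (E n).eval 1 / n.factorial
        = if n = 0 then 2 else 0 := by
      have := congrArg (coeff n) hFG
      simpa [hFdef, hGdef, coeff_mk, hcoeff2] using this
    rw [hn.neg_one_pow, one_mul] at hc1
    rw [← hc1] at hc2
    have hfac : (n.factorial : ℚ) ≠ 0 := Nat.cast_ne_zero.mpr (Nat.factorial_ne_zero _)
    rcases eq_or_ne n 0 with h | h
    · subst h; simp at hc2 ⊢; linarith [hc2]
    · simp only [h, if_false] at hc2 ⊢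
      field_simp at hc2
      linarith
  have ha0 : a 0 = 1 := by simpa using heven 0 Even.zero
  have ha2j : ∀ j, 1 ≤ j → a (2 * j) = 0 := by
    intro j hj
    have := heven (2 * j) (even_two_mul j)
    simpa [Nat.mul_ne_zero two_ne_zero (by omega : j ≠ 0)] using this
  -- the recurrence at m = 2p+2
  set m : ℕ := 2 * p + 2 with hm
  have hrec : ∑ k ∈ Finset.range (m + 1), (m.choose k : ℚ) * a k + a m = 0 := by
    have hc := congrArg (coeff m) h1
    rw [coeff_mul, hcoeff2] at hc
    simp only [hm, Nat.succ_ne_zero, if_false] at hc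
    rw [Finset.Nat.sum_antidiagonal_eq_sum_range_succ_mk] at hc
    have hterm : ∀ k ∈ Finset.range (m + 1),
        (coeff k) (exp ℚ + 1) * (coeff (m - k)) F
          = (m.choose (m - k) : ℚ) * a (m - k) / m.factorial
            + (if k = 0 then a m / m.factorial else 0) := by
      intro k hk
      rw [Finset.mem_range] at hk
      have hkm : k ≤ m := by omega
      have hchoose : (m.choose (m - k) : ℚ) * (m - k).factorial * k.factorial
          = m.factorial := by
        have := Nat.choose_mul_factorial_mul_factorial (Nat.sub_le m k)
        rw [Nat.sub_sub_self hkm] at this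
        exact_mod_cast this
      have hfk : (k.factorial : ℚ) ≠ 0 := Nat.cast_ne_zero.mpr (Nat.factorial_ne_zero _)
      have hfmk : ((m - k).factorial : ℚ) ≠ 0 := Nat.cast_ne_zero.mpr (Nat.factorial_ne_zero _)
      have hfm : (m.factorial : ℚ) ≠ 0 := Nat.cast_ne_zero.mpr (Nat.factorial_ne_zero _)
      rw [map_add, coeff_exp, coeff_one]
      simp only [hFdef, coeff_mk, Algebra.algebraMap_self, RingHom.id_apply]
      rcases eq_or_ne k 0 with h | h
      · subst h
        simp only [if_pos rfl, Nat.sub_zero, Nat.factorial_zero]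
        rw [show (m.choose m : ℚ) = 1 by simp]
        push_cast
        ring
      · simp only [h, if_false, add_zero]
        have hchoose2 : (m.choose k : ℚ) * k.factorial * (m - k).factorial
            = m.factorial := by
          exact_mod_cast Nat.choose_mul_factorial_mul_factorial hkm
        field_simp
        rw [Nat.choose_symm hkm]
        linear_combination (-(a (m - k))) * hchoose2
    rw [Finset.sum_congr rfl hterm, Finset.sum_add_distrib, Finset.sum_ite_eq'] at hc
    simp only [Finset.mem_range, Nat.succ_pos, if_pos (Nat.succ_pos m)] at hc
    have hrefl := Finset.sum_range_reflect
      (fun k => (m.choose k : ℚ) * a k / m.factorial) (m + 1)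
    simp only [Nat.add_sub_cancel] at hrefl
    rw [hrefl] at hc
    have hfm : (m.factorial : ℚ) ≠ 0 := Nat.cast_ne_zero.mpr (Nat.factorial_ne_zero _)
    simp only [if_true] at hc
    rw [← Finset.sum_div, ← add_div, div_eq_zero_iff] at hc
    rcases hc with h | h
    · exact h
    · exact absurd h hfm
  -- now split even/odd
  have ham : a m = 0 := ha2j (p + 1) (by omega)
  have hsplit := sum_split_even_odd (fun k => (m.choose k : ℚ) * a k)
    (by simp [ha0]) (fun j hj => by simp [ha2j j hj]) p
  have hmr : m + 1 = 2 * p + 3 := by omega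
  rw [hmr] at hrec
  rw [hsplit, ham, add_zero] at hrec
  have hodd : ∑ ℓ ∈ Finset.range (p + 1), (m.choose (2 * ℓ + 1) : ℚ) * a (2 * ℓ + 1) = -1 := by
    linarith
  calc ∑ ℓ ∈ Finset.range (p + 1),
        ((-(2 * (ℓ : ℚ) + 2) * (E (2 * ℓ + 1)).eval 0) / (2 * (ℓ : ℚ) + 2)) *
          (Nat.choose (2 * p + 2) (2 * ℓ + 1) : ℚ)
      = ∑ ℓ ∈ Finset.range (p + 1), -((m.choose (2 * ℓ + 1) : ℚ) * a (2 * ℓ + 1)) := by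
        apply Finset.sum_congr rfl
        intro ℓ _
        have hc : (2 * (ℓ : ℚ) + 2) ≠ 0 := by positivity
        simp only [hm, ha]
        field_simp
    _ = 1 := by rw [Finset.sum_neg_distrib, hodd]; norm_num
end

section
/- For positive integers k₁, ℓ₁, positive integers n₁, and integer weight w with w − k₁ ≥ 1 and w − ℓ₁ ≥ 1, the double integral (1/(16π²)) ∫_{ℝ²} du dv (−1)^{k₁+ℓ₁} / ((u+in₁)^{k₁} (u−in₁)^{ℓ₁} (v+in₂)^{w−k₁} (v−in₂)^{w−ℓ₁}) factorizes, and when evaluated by residues equals (1/2^{2w}) C(k₁+ℓ₁−2, k₁−1) C(2w−k₁−ℓ₁−2, w−k₁−1) (θ(−n₁n₂) + (−1)^{k₁+ℓ₁} θ(n₁n₂)) / (|n₁|^{k₁+ℓ₁−1} |n₂|^{2w−k₁−ℓ₁−1}), where n₂ ≠ 0 is a real number and θ(x) = 1 if x ≥ 0, else 0 (with θ applied to the sign of n₁n₂). -/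
open Complex Real MeasureTheory

open Filter

lemma auxNe (b : ℝ) (hb : b ≠ 0) (u : ℝ) : ((u:ℂ) + Complex.I * b) ≠ 0 := by
  intro h
  have := congrArg Complex.im h
  simp at this
  exact hb this

lemma normAux (b u : ℝ) : ‖(u:ℂ) + Complex.I * b‖ = Real.sqrt (u^2 + b^2) := by
  rw [Complex.norm_def]
  congr 1
  simp [Complex.normSq_apply]
  ring

lemma integrableAux (a b : ℝ) (ha : a ≠ 0) (hb : b ≠ 0) (k ℓ : ℕ) (hkl : 2 ≤ k + ℓ) :
    Integrable fun u : ℝ => (((u:ℂ) + Complex.I * a) ^ k * ((u:ℂ) + Complex.I * b) ^ ℓ)⁻¹ := by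
  set m := min |a| |b| with hm
  have hm0 : 0 < m := lt_min (abs_pos.2 ha) (abs_pos.2 hb)
  have hcont : Continuous fun u : ℝ =>
      (((u:ℂ) + Complex.I * a) ^ k * ((u:ℂ) + Complex.I * b) ^ ℓ)⁻¹ := by
    apply Continuous.inv₀
    · fun_prop
    · intro u
      exact mul_ne_zero (pow_ne_zero _ (auxNe a ha u)) (pow_ne_zero _ (auxNe b hb u))
  apply (integrable_inv_one_add_sq.const_mul ((min 1 (m^2) * m^(k+ℓ-2))⁻¹)).mono'
    hcont.aestronglyMeasurable
  filter_upwards with u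
  have hr2 : Real.sqrt (u^2+m^2) ^ 2 = u^2 + m^2 := Real.sq_sqrt (by positivity)
  have hrm : m ≤ Real.sqrt (u^2+m^2) := by
    nlinarith [Real.sqrt_nonneg (u^2+m^2), sq_nonneg u]
  have hr0 : 0 < Real.sqrt (u^2+m^2) := lt_of_lt_of_le hm0 hrm
  have hma : m^2 ≤ a^2 := by
    have h1 : m ≤ |a| := min_le_left _ _
    nlinarith [abs_nonneg a, _root_.sq_abs a]
  have hmb : m^2 ≤ b^2 := by
    have h1 : m ≤ |b| := min_le_right _ _
    nlinarith [abs_nonneg b, _root_.sq_abs b]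
  have hrs : Real.sqrt (u^2+m^2) ≤ Real.sqrt (u^2+a^2) := Real.sqrt_le_sqrt (by nlinarith)
  have hrt : Real.sqrt (u^2+m^2) ≤ Real.sqrt (u^2+b^2) := Real.sqrt_le_sqrt (by nlinarith)
  have key : min 1 (m^2) * m^(k+ℓ-2) * (1 + u^2)
      ≤ Real.sqrt (u^2+a^2)^k * Real.sqrt (u^2+b^2)^ℓ := by
    have h1 : min 1 (m^2) * (1 + u^2) ≤ Real.sqrt (u^2+m^2) ^ 2 := by
      rw [hr2]
      have := min_le_left 1 (m^2)
      have := min_le_right 1 (m^2)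
      have : (0:ℝ) < min 1 (m^2) := lt_min one_pos (by positivity)
      nlinarith [min_le_left 1 (m^2), min_le_right 1 (m^2)]
    have h2 : m^(k+ℓ-2) ≤ Real.sqrt (u^2+m^2) ^ (k+ℓ-2) :=
      pow_le_pow_left₀ hm0.le hrm _
    calc min 1 (m^2) * m^(k+ℓ-2) * (1 + u^2)
        = (min 1 (m^2) * (1 + u^2)) * m^(k+ℓ-2) := by ring
      _ ≤ Real.sqrt (u^2+m^2) ^ 2 * Real.sqrt (u^2+m^2) ^ (k+ℓ-2) := by
          apply mul_le_mul h1 h2 (by positivity) (by positivity)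
      _ = Real.sqrt (u^2+m^2) ^ (k+ℓ) := by rw [← pow_add]; congr 1; omega
      _ = Real.sqrt (u^2+m^2) ^ k * Real.sqrt (u^2+m^2) ^ ℓ := by rw [← pow_add]
      _ ≤ Real.sqrt (u^2+a^2)^k * Real.sqrt (u^2+b^2)^ℓ := by
          apply mul_le_mul (pow_le_pow_left₀ hr0.le hrs _) (pow_le_pow_left₀ hr0.le hrt _)
            (by positivity) (by positivity)
  have hnorm : ‖(((u:ℂ) + Complex.I * a) ^ k * ((u:ℂ) + Complex.I * b) ^ ℓ)⁻¹‖
      = (Real.sqrt (u^2+a^2) ^ k * Real.sqrt (u^2+b^2) ^ ℓ)⁻¹ := by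
    rw [norm_inv, norm_mul, norm_pow, norm_pow, normAux, normAux]
  rw [hnorm]
  rw [← mul_inv]
  apply inv_anti₀ (by positivity) key

lemma vanishAux (b : ℝ) (hb : b ≠ 0) (ℓ : ℕ) (hℓ : 2 ≤ ℓ) :
    ∫ u : ℝ, (((u:ℂ) + Complex.I * b) ^ ℓ)⁻¹ = 0 := by
  have hℓC : ((1:ℂ) - ℓ) ≠ 0 := by
    have h1 : ((ℓ:ℕ):ℂ) ≠ 1 := by exact_mod_cast (by omega : ℓ ≠ 1)
    intro h
    exact h1 (by linear_combination -h)
  have hint : Integrable fun u : ℝ => (((u:ℂ) + Complex.I * b) ^ ℓ)⁻¹ := by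
    have := integrableAux b b hb hb ℓ 0 (by omega)
    simpa using this
  have hderiv : ∀ x : ℝ, HasDerivAt
      (fun u : ℝ => ((1:ℂ) - ℓ)⁻¹ * ((u:ℂ) + Complex.I * b) ^ (1 - (ℓ:ℤ)))
      ((((x:ℂ) + Complex.I * b) ^ ℓ)⁻¹) x := by
    intro x
    have h0 : ((x:ℂ) + Complex.I * b) ≠ 0 := auxNe b hb x
    have haff : HasDerivAt (fun z : ℂ => z + Complex.I * b) 1 (x:ℂ) :=
      (hasDerivAt_id _).add_const _
    have hz := (hasDerivAt_zpow (1 - (ℓ:ℤ)) ((x:ℂ) + Complex.I * b) (Or.inl h0)).comp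
      (x:ℂ) haff
    have := (hz.const_mul (((1:ℂ) - ℓ)⁻¹)).comp_ofReal
    convert this using 1
    · rfl
    rw [show (1 - (ℓ:ℤ) - 1) = -(ℓ:ℤ) by ring, zpow_neg, zpow_natCast]
    field_simp
    push_cast
    ring
  have hnormtop : Tendsto (fun u : ℝ => ‖(u:ℂ) + Complex.I * b‖) atTop atTop := by
    apply tendsto_atTop_mono (fun u => ?_) (tendsto_abs_atTop_atTop)
    simpa using Complex.abs_re_le_norm ((u:ℂ) + Complex.I * b)
  have hnormbot : Tendsto (fun u : ℝ => ‖(u:ℂ) + Complex.I * b‖) atBot atTop := by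
    apply tendsto_atTop_mono (fun u => ?_) (tendsto_abs_atBot_atTop)
    simpa using Complex.abs_re_le_norm ((u:ℂ) + Complex.I * b)
  have hzpow : Tendsto (fun s : ℝ => s ^ (1 - (ℓ:ℤ))) atTop (nhds 0) :=
    tendsto_zpow_atTop_zero (by omega)
  have htends : ∀ l : Filter ℝ, Tendsto (fun u : ℝ => ‖(u:ℂ) + Complex.I * b‖) l atTop →
      Tendsto (fun u : ℝ => ((1:ℂ) - ℓ)⁻¹ * ((u:ℂ) + Complex.I * b) ^ (1 - (ℓ:ℤ))) l
        (nhds 0) := by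
    intro l hl
    rw [show (0:ℂ) = ((1:ℂ) - ℓ)⁻¹ * 0 by ring]
    apply Tendsto.const_mul
    rw [tendsto_zero_iff_norm_tendsto_zero]
    have : (fun u : ℝ => ‖((u:ℂ) + Complex.I * b) ^ (1 - (ℓ:ℤ))‖)
        = (fun s : ℝ => s ^ (1 - (ℓ:ℤ))) ∘ (fun u : ℝ => ‖(u:ℂ) + Complex.I * b‖) := by
      funext u; simp [norm_zpow]
    rw [this]
    exact hzpow.comp hl
  have := MeasureTheory.integral_of_hasDerivAt_of_tendsto hderiv hint
    (htends _ hnormbot) (htends _ hnormtop)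
  simpa using this

lemma auxNe' (a : ℝ) (ha : a ≠ 0) (u : ℝ) : ((u:ℂ) - Complex.I * a) ≠ 0 := by
  have := auxNe (-a) (neg_ne_zero.2 ha) u
  intro h; apply this
  rw [← h]; push_cast; ring

lemma minusShape (a : ℝ) (k ℓ : ℕ) : (fun u : ℝ =>
    (((u:ℂ) + Complex.I * a) ^ k * ((u:ℂ) - Complex.I * a) ^ ℓ)⁻¹)
    = fun u : ℝ => (((u:ℂ) + Complex.I * a) ^ k * ((u:ℂ) + Complex.I * ((-a : ℝ):ℂ)) ^ ℓ)⁻¹ := by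
  funext u; push_cast; ring_nf

lemma integrableAux' (a : ℝ) (ha : a ≠ 0) (k ℓ : ℕ) (hkl : 2 ≤ k + ℓ) :
    Integrable fun u : ℝ => (((u:ℂ) + Complex.I * a) ^ k * ((u:ℂ) - Complex.I * a) ^ ℓ)⁻¹ := by
  rw [minusShape]
  exact_mod_cast integrableAux a (-a) ha (neg_ne_zero.2 ha) k ℓ hkl

lemma vanishAux' (a : ℝ) (ha : a ≠ 0) (ℓ : ℕ) (hℓ : 2 ≤ ℓ) :
    ∫ u : ℝ, (((u:ℂ) - Complex.I * a) ^ ℓ)⁻¹ = 0 := by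
  have := vanishAux (-a) (neg_ne_zero.2 ha) ℓ hℓ
  rw [← this]
  congr 1; funext u; push_cast; ring_nf

lemma baseIntegral (a : ℝ) (ha : 0 < a) :
    ∫ u : ℝ, (((u:ℂ) + Complex.I * a) ^ 1 * ((u:ℂ) - Complex.I * a) ^ 1)⁻¹
      = ((Real.pi / a : ℝ) : ℂ) := by
  have h1 : ∀ u : ℝ, (((u:ℂ) + Complex.I * a) ^ 1 * ((u:ℂ) - Complex.I * a) ^ 1)⁻¹
      = (((u^2 + a^2)⁻¹ : ℝ) : ℂ) := by
    intro u
    push_cast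
    rw [pow_one, pow_one]
    rw [show ((u:ℂ) + Complex.I * a) * ((u:ℂ) - Complex.I * a)
      = (u:ℂ)^2 - (Complex.I)^2 * (a:ℂ)^2 by ring, Complex.I_sq]
    ring_nf
  simp_rw [h1]
  have hco : (∫ u:ℝ, (((u^2+a^2)⁻¹ : ℝ):ℂ)) = ((∫ u:ℝ, (u^2+a^2)⁻¹ : ℝ):ℂ) :=
    integral_ofReal
  rw [hco]
  norm_cast
  -- now: ∫ u : ℝ, (u^2 + a^2)⁻¹ = π / a
  have h2 : ∀ u : ℝ, (u^2 + a^2)⁻¹ = a⁻¹ * (a⁻¹ * ((1 + ((a⁻¹ * u))^2)⁻¹)) := by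
    intro u
    rw [← mul_inv, ← mul_inv]
    congr 1
    field_simp
    ring
  simp_rw [h2]
  rw [integral_const_mul]
  have h3 := MeasureTheory.Measure.integral_comp_mul_left
    (fun x : ℝ => a⁻¹ * ((1 + x^2)⁻¹)) a⁻¹
  rw [h3, abs_of_pos (inv_pos.2 (inv_pos.2 ha)), smul_eq_mul]
  rw [integral_const_mul, integral_univ_inv_one_add_sq]
  field_simp

lemma stepIntegral (a : ℝ) (ha : 0 < a) (k ℓ : ℕ) (hk : 1 ≤ k) (hℓ : 1 ≤ ℓ)
    (hkl : 3 ≤ k + ℓ) :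
    ∫ u : ℝ, (((u:ℂ) + Complex.I * a) ^ k * ((u:ℂ) - Complex.I * a) ^ ℓ)⁻¹
      = (2 * Complex.I * a)⁻¹ *
        ((∫ u : ℝ, (((u:ℂ) + Complex.I * a) ^ (k-1) * ((u:ℂ) - Complex.I * a) ^ ℓ)⁻¹)
          - ∫ u : ℝ, (((u:ℂ) + Complex.I * a) ^ k * ((u:ℂ) - Complex.I * a) ^ (ℓ-1))⁻¹) := by
  have ha' : a ≠ 0 := ha.ne'
  have h2Ia : (2 * Complex.I * (a:ℂ)) ≠ 0 := by
    simp [Complex.I_ne_zero, Complex.ofReal_ne_zero.2 ha']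
  have hint1 := integrableAux' a ha' (k-1) ℓ (by omega)
  have hint2 := integrableAux' a ha' k (ℓ-1) (by omega)
  have hpt : ∀ u : ℝ, (((u:ℂ) + Complex.I * a) ^ k * ((u:ℂ) - Complex.I * a) ^ ℓ)⁻¹
      = (2 * Complex.I * a)⁻¹ *
        ((((u:ℂ) + Complex.I * a) ^ (k-1) * ((u:ℂ) - Complex.I * a) ^ ℓ)⁻¹
          - (((u:ℂ) + Complex.I * a) ^ k * ((u:ℂ) - Complex.I * a) ^ (ℓ-1))⁻¹) := by
    intro u
    obtain ⟨p, rfl⟩ : ∃ p, k = p + 1 := ⟨k - 1, by omega⟩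
    obtain ⟨q, rfl⟩ : ∃ q, ℓ = q + 1 := ⟨ℓ - 1, by omega⟩
    simp only [Nat.add_sub_cancel]
    have h1 := auxNe a ha' u
    have h2 := auxNe' a ha' u
    have hI := Complex.I_ne_zero
    have haC : ((a:ℝ):ℂ) ≠ 0 := Complex.ofReal_ne_zero.2 ha'
    have key : (((u:ℂ) + Complex.I * a) ^ p * ((u:ℂ) - Complex.I * a) ^ (q+1))⁻¹
        - (((u:ℂ) + Complex.I * a) ^ (p+1) * ((u:ℂ) - Complex.I * a) ^ q)⁻¹
        = (((u:ℂ) + Complex.I * a) ^ (p+1) * ((u:ℂ) - Complex.I * a) ^ (q+1))⁻¹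
          * (2 * Complex.I * a) := by
      have hY : ((u:ℂ) + Complex.I * a) ^ p * ((u:ℂ) - Complex.I * a) ^ (q+1) ≠ 0 :=
        mul_ne_zero (pow_ne_zero _ h1) (pow_ne_zero _ h2)
      have hZ : ((u:ℂ) + Complex.I * a) ^ (p+1) * ((u:ℂ) - Complex.I * a) ^ q ≠ 0 :=
        mul_ne_zero (pow_ne_zero _ h1) (pow_ne_zero _ h2)
      have hX : ((u:ℂ) + Complex.I * a) ^ (p+1) * ((u:ℂ) - Complex.I * a) ^ (q+1) ≠ 0 :=
        mul_ne_zero (pow_ne_zero _ h1) (pow_ne_zero _ h2)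
      rw [inv_sub_inv hY hZ, eq_comm, inv_mul_eq_div,
        div_eq_div_iff hX (mul_ne_zero hY hZ)]
      ring
    rw [key, mul_comm (((((u:ℂ) + Complex.I * a) ^ (p+1)
      * ((u:ℂ) - Complex.I * a) ^ (q+1))⁻¹)) (2 * Complex.I * (a:ℂ)), ← mul_assoc,
      inv_mul_cancel₀ h2Ia, one_mul]
  simp_rw [hpt]
  rw [integral_const_mul, integral_sub hint1 hint2]

lemma oneDim (a : ℝ) (ha : 0 < a) : ∀ (n p q : ℕ), p + q = n →
    ∫ u : ℝ, (((u:ℂ) + Complex.I * a) ^ (p+1) * ((u:ℂ) - Complex.I * a) ^ (q+1))⁻¹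
      = ((Real.pi / a : ℝ) : ℂ) * ((2 * Complex.I * a)⁻¹) ^ (p+q) * (-1) ^ q *
          (Nat.choose (p+q) q : ℂ) := by
  have ha' : a ≠ 0 := ha.ne'
  intro n
  induction n with
  | zero =>
    intro p q hpq
    obtain ⟨rfl, rfl⟩ : p = 0 ∧ q = 0 := by omega
    simpa using baseIntegral a ha
  | succ n ih =>
    intro p q hpq
    have hstep := stepIntegral a ha (p+1) (q+1) (by omega) (by omega) (by omega)
    simp only [Nat.add_sub_cancel] at hstep
    rcases Nat.eq_zero_or_pos p with rfl | hp
    · -- p = 0 : first integral vanishes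
      obtain ⟨q', rfl⟩ : ∃ q', q = q' + 1 := ⟨q - 1, by omega⟩
      rw [hstep]
      have hvan : ∫ u : ℝ, (((u:ℂ) + Complex.I * a) ^ 0 * ((u:ℂ) - Complex.I * a) ^ (q'+2))⁻¹
          = 0 := by
        simp only [pow_zero, one_mul]
        exact vanishAux' a ha' (q'+2) (by omega)
      rw [hvan, ih 0 q' (by omega)]
      simp only [Nat.zero_add, Nat.choose_self, Nat.cast_one]
      ring
    · rcases Nat.eq_zero_or_pos q with rfl | hq
      · -- q = 0 : second integral vanishes
        obtain ⟨p', rfl⟩ : ∃ p', p = p' + 1 := ⟨p - 1, by omega⟩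
        rw [hstep]
        have hvan : ∫ u : ℝ, (((u:ℂ) + Complex.I * a) ^ (p'+2) * ((u:ℂ) - Complex.I * a) ^ 0)⁻¹
            = 0 := by
          simp only [pow_zero, mul_one]
          exact vanishAux a ha' (p'+2) (by omega)
        rw [hvan, ih p' 0 (by omega)]
        simp only [Nat.add_zero, Nat.choose_zero_right, Nat.cast_one]
        ring
      · -- generic case
        obtain ⟨p', rfl⟩ : ∃ p', p = p' + 1 := ⟨p - 1, by omega⟩
        obtain ⟨q', rfl⟩ : ∃ q', q = q' + 1 := ⟨q - 1, by omega⟩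
        rw [hstep, ih p' (q'+1) (by omega), ih (p'+1) q' (by omega)]
        have hch : (Nat.choose (p'+1+(q'+1)) (q'+1) : ℂ)
            = (Nat.choose (p'+(q'+1)) (q'+1) : ℂ) + (Nat.choose (p'+1+q') q' : ℂ) := by
          have : Nat.choose (p'+1+(q'+1)) (q'+1)
              = Nat.choose (p'+(q'+1)) q' + Nat.choose (p'+(q'+1)) (q'+1) := by
            rw [show p'+1+(q'+1) = (p'+(q'+1)) + 1 by omega]
            exact Nat.choose_succ_succ' ((p'+(q'+1))) q' ▸ by
              rw [Nat.choose_succ_succ]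
          rw [this]
          push_cast
          rw [show p'+1+q' = p'+(q'+1) by omega]
          ring
        rw [hch]
        rw [show p'+(q'+1) = p'+q'+1 by omega, show p'+1+q' = p'+q'+1 by omega,
          show p'+1+(q'+1) = p'+q'+2 by omega]
        push_cast
        ring

lemma negISq : ((-Complex.I)^2 : ℂ) = -1 := by
  rw [pow_two, neg_mul_neg, Complex.I_mul_I]

lemma invTwoI (z : ℂ) : (2*Complex.I*z)⁻¹ = (-Complex.I) * (2*z)⁻¹ := by
  rw [show (2*Complex.I*z) = Complex.I * (2*z) by ring, mul_inv, Complex.inv_I]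

lemma algPos (K L M N : ℕ) (h : K + M = L + N) (x y c1 c2 : ℂ) (hx : x ≠ 0) (hy : y ≠ 0)
    (hp : ((Real.pi:ℝ):ℂ) ≠ 0) :
    (1 / (16 * ((Real.pi:ℝ):ℂ)^2)) * ((-1:ℂ)^(K+1+(L+1)) *
      ((((Real.pi:ℝ):ℂ)/x * ((2*Complex.I*x)⁻¹)^(K+L) * (-1)^L * c1) *
       (((Real.pi:ℝ):ℂ)/y * ((2*Complex.I*y)⁻¹)^(M+N) * (-1)^N * c2)))
    = (1 / 2^(K+L+M+N+4)) * c1 * c2 * ((0:ℂ) + (-1:ℂ)^(K+1+(L+1)) * 1) /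
        (x^(K+L+1) * y^(M+N+1)) := by
  simp_rw [invTwoI, mul_pow]
  have hs : (((-Complex.I)^(K+L) * (-Complex.I)^(M+N)) * ((-1:ℂ)^L * (-1:ℂ)^N)) = 1 := by
    rw [← pow_add, show K+L+(M+N) = 2*(L+N) by omega, pow_mul, negISq]
    simp only [← pow_add]
    exact Even.neg_one_pow ⟨L+N, by omega⟩
  trans ((((-Complex.I)^(K+L) * (-Complex.I)^(M+N)) * ((-1:ℂ)^L * (-1:ℂ)^N)) *
      ((1/(16*((Real.pi:ℝ):ℂ)^2)) * ((-1:ℂ)^(K+1+(L+1)) *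
        ((((Real.pi:ℝ):ℂ)/x * ((2*x)⁻¹)^(K+L) * c1) * (((Real.pi:ℝ):ℂ)/y * ((2*y)⁻¹)^(M+N) * c2)))))
  · ring
  · rw [hs, one_mul]
    simp only [inv_pow]
    have h1 : ((2:ℂ)*x)^(K+L) ≠ 0 := pow_ne_zero _ (mul_ne_zero two_ne_zero hx)
    have h2 : ((2:ℂ)*y)^(M+N) ≠ 0 := pow_ne_zero _ (mul_ne_zero two_ne_zero hy)
    have h3 : x^(K+L+1) ≠ 0 := pow_ne_zero _ hx
    have h4 : y^(M+N+1) ≠ 0 := pow_ne_zero _ hy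
    field_simp
    ring

lemma algNeg (K L M N : ℕ) (h : K + M = L + N) (x y c1 c2 : ℂ) (hx : x ≠ 0) (hy : y ≠ 0)
    (hp : ((Real.pi:ℝ):ℂ) ≠ 0) :
    (1 / (16 * ((Real.pi:ℝ):ℂ)^2)) * ((-1:ℂ)^(K+1+(L+1)) *
      ((((Real.pi:ℝ):ℂ)/x * ((2*Complex.I*x)⁻¹)^(K+L) * (-1)^L * c1) *
       (((Real.pi:ℝ):ℂ)/y * ((2*Complex.I*y)⁻¹)^(M+N) * (-1)^M * c2)))
    = (1 / 2^(K+L+M+N+4)) * c1 * c2 * ((1:ℂ) + (-1:ℂ)^(K+1+(L+1)) * 0) /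
        (x^(K+L+1) * y^(M+N+1)) := by
  simp_rw [invTwoI, mul_pow]
  have hs : (((-Complex.I)^(K+L) * (-Complex.I)^(M+N)) *
      ((-1:ℂ)^L * (-1:ℂ)^M * (-1:ℂ)^(K+1+(L+1)))) = 1 := by
    rw [← pow_add, show K+L+(M+N) = 2*(L+N) by omega, pow_mul, negISq]
    simp only [← pow_add]
    refine Even.neg_one_pow ?_
    refine ⟨2*L+N+1, by omega⟩
  trans ((((-Complex.I)^(K+L) * (-Complex.I)^(M+N)) *
      ((-1:ℂ)^L * (-1:ℂ)^M * (-1:ℂ)^(K+1+(L+1)))) *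
      ((1/(16*((Real.pi:ℝ):ℂ)^2)) *
        ((((Real.pi:ℝ):ℂ)/x * ((2*x)⁻¹)^(K+L) * c1) * (((Real.pi:ℝ):ℂ)/y * ((2*y)⁻¹)^(M+N) * c2))))
  · ring
  · rw [hs, one_mul]
    simp only [inv_pow]
    have h1 : ((2:ℂ)*x)^(K+L) ≠ 0 := pow_ne_zero _ (mul_ne_zero two_ne_zero hx)
    have h2 : ((2:ℂ)*y)^(M+N) ≠ 0 := pow_ne_zero _ (mul_ne_zero two_ne_zero hy)
    have h3 : x^(K+L+1) ≠ 0 := pow_ne_zero _ hx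
    have h4 : y^(M+N+1) ≠ 0 := pow_ne_zero _ hy
    field_simp
    ring

/-- The step function `θ(x) = 1` for `x ≥ 0` and `θ(x) = 0` otherwise. -/
noncomputable def stepTheta (x : ℝ) : ℝ := if 0 ≤ x then 1 else 0

theorem factorized_residue_integral (k₁ ℓ₁ w n₁ : ℕ)
    (hk₁ : 1 ≤ k₁) (hℓ₁ : 1 ≤ ℓ₁) (hn₁ : 1 ≤ n₁)
    (hwk : k₁ + 1 ≤ w) (hwℓ : ℓ₁ + 1 ≤ w) (n₂ : ℝ) (hn₂ : n₂ ≠ 0) :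
    (1 / (16 * (π : ℂ) ^ 2)) *
        ∫ p : ℝ × ℝ,
          (-1 : ℂ) ^ (k₁ + ℓ₁) /
            (((p.1 : ℂ) + Complex.I * n₁) ^ k₁ * ((p.1 : ℂ) - Complex.I * n₁) ^ ℓ₁ *
              ((p.2 : ℂ) + Complex.I * n₂) ^ (w - k₁) *
              ((p.2 : ℂ) - Complex.I * n₂) ^ (w - ℓ₁)) =
      (1 / 2 ^ (2 * w) : ℂ) *
        (Nat.choose (k₁ + ℓ₁ - 2) (k₁ - 1) : ℂ) *
        (Nat.choose (2 * w - k₁ - ℓ₁ - 2) (w - k₁ - 1) : ℂ) *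
        (((stepTheta (-((n₁ : ℝ) * n₂)) : ℝ) : ℂ) +
            (-1 : ℂ) ^ (k₁ + ℓ₁) * ((stepTheta ((n₁ : ℝ) * n₂) : ℝ) : ℂ)) /
          (((n₁ : ℂ)) ^ (k₁ + ℓ₁ - 1) * ((|n₂| : ℝ) : ℂ) ^ (2 * w - k₁ - ℓ₁ - 1)) := by
  obtain ⟨K, rfl⟩ : ∃ K, k₁ = K + 1 := ⟨k₁ - 1, by omega⟩
  obtain ⟨L, rfl⟩ : ∃ L, ℓ₁ = L + 1 := ⟨ℓ₁ - 1, by omega⟩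
  obtain ⟨M, hM⟩ : ∃ M, w - (K + 1) = M + 1 := ⟨w - K - 2, by omega⟩
  obtain ⟨N, hN⟩ : ∃ N, w - (L + 1) = N + 1 := ⟨w - L - 2, by omega⟩
  have hrel : K + M = L + N := by omega
  have hn₁R : (0:ℝ) < (n₁:ℝ) := by exact_mod_cast Nat.lt_of_lt_of_le Nat.zero_lt_one hn₁
  have hπ : ((Real.pi:ℝ):ℂ) ≠ 0 := Complex.ofReal_ne_zero.2 Real.pi_ne_zero
  have hxC : ((n₁:ℕ):ℂ) ≠ 0 := by exact_mod_cast (by omega : n₁ ≠ 0)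
  have hcs1 : (K+L).choose K = (K+L).choose L := by
    have h2 := Nat.choose_symm (Nat.le_add_right K L)
    rw [Nat.add_sub_cancel_left] at h2
    exact h2.symm
  have hcs2 : (M+N).choose M = (M+N).choose N := by
    have h2 := Nat.choose_symm (Nat.le_add_right M N)
    rw [Nat.add_sub_cancel_left] at h2
    exact h2.symm
  rw [hM, hN,
    show K + 1 + (L + 1) - 2 = K + L by omega,
    show K + 1 - 1 = K by omega,
    show 2 * w - (K + 1) - (L + 1) - 2 = M + N by omega,
    show M + 1 - 1 = M by omega,
    show K + 1 + (L + 1) - 1 = K + L + 1 by omega,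
    show 2 * w - (K + 1) - (L + 1) - 1 = M + N + 1 by omega,
    show 2 * w = K + L + M + N + 4 by omega,
    hcs1]
  rcases hn₂.lt_or_gt with hneg | hpos
  · -- n₂ < 0
    have hb : (0:ℝ) < -n₂ := by linarith
    have hyC : ((-n₂ : ℝ):ℂ) ≠ 0 := Complex.ofReal_ne_zero.2 hb.ne'
    have hθ1 : stepTheta (-((n₁:ℝ) * n₂)) = 1 := by
      unfold stepTheta
      rw [if_pos (by nlinarith)]
    have hθ2 : stepTheta ((n₁:ℝ) * n₂) = 0 := by
      unfold stepTheta
      rw [if_neg (by push_neg; nlinarith)]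
    rw [hθ1, hθ2, abs_of_neg hneg]
    have hprod : (fun p : ℝ × ℝ => (-1 : ℂ) ^ (K+1+(L+1)) /
          (((p.1 : ℂ) + Complex.I * n₁) ^ (K+1) * ((p.1 : ℂ) - Complex.I * n₁) ^ (L+1) *
            ((p.2 : ℂ) + Complex.I * n₂) ^ (M+1) * ((p.2 : ℂ) - Complex.I * n₂) ^ (N+1)))
        = fun p : ℝ × ℝ => (-1:ℂ)^(K+1+(L+1)) *
            ((fun u : ℝ => (((u:ℂ) + Complex.I * (((n₁:ℝ)):ℂ)) ^ (K+1) *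
                ((u:ℂ) - Complex.I * (((n₁:ℝ)):ℂ)) ^ (L+1))⁻¹) p.1 *
             (fun v : ℝ => (((v:ℂ) + Complex.I * (((-n₂:ℝ)):ℂ)) ^ (N+1) *
                ((v:ℂ) - Complex.I * (((-n₂:ℝ)):ℂ)) ^ (M+1))⁻¹) p.2) := by
      funext p
      rw [div_eq_mul_inv]
      congr 1
      rw [← mul_inv]
      congr 1
      push_cast
      ring
    rw [hprod, MeasureTheory.integral_const_mul, MeasureTheory.Measure.volume_eq_prod,
      MeasureTheory.integral_prod_mul
        (f := fun u : ℝ => (((u:ℂ) + Complex.I * (((n₁:ℝ)):ℂ)) ^ (K+1) *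
          ((u:ℂ) - Complex.I * (((n₁:ℝ)):ℂ)) ^ (L+1))⁻¹)
        (g := fun v : ℝ => (((v:ℂ) + Complex.I * (((-n₂:ℝ)):ℂ)) ^ (N+1) *
          ((v:ℂ) - Complex.I * (((-n₂:ℝ)):ℂ)) ^ (M+1))⁻¹),
      oneDim (n₁:ℝ) hn₁R (K+L) K L rfl, oneDim (-n₂) hb (N+M) N M rfl,
      show (N+M).choose M = (M+N).choose M by rw [Nat.add_comm]]
    push_cast
    linear_combination algNeg K L M N hrel ((n₁:ℕ):ℂ) (-(n₂:ℂ)) (((K+L).choose L : ℕ):ℂ)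
      (((M+N).choose M : ℕ):ℂ) hxC (by simpa using hyC) hπ
  · -- n₂ > 0
    have hyC : ((n₂ : ℝ):ℂ) ≠ 0 := Complex.ofReal_ne_zero.2 hpos.ne'
    have hθ1 : stepTheta (-((n₁:ℝ) * n₂)) = 0 := by
      unfold stepTheta
      rw [if_neg (by push_neg; nlinarith)]
    have hθ2 : stepTheta ((n₁:ℝ) * n₂) = 1 := by
      unfold stepTheta
      rw [if_pos (by nlinarith)]
    rw [hθ1, hθ2, abs_of_pos hpos, hcs2]
    have hprod : (fun p : ℝ × ℝ => (-1 : ℂ) ^ (K+1+(L+1)) /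
          (((p.1 : ℂ) + Complex.I * n₁) ^ (K+1) * ((p.1 : ℂ) - Complex.I * n₁) ^ (L+1) *
            ((p.2 : ℂ) + Complex.I * n₂) ^ (M+1) * ((p.2 : ℂ) - Complex.I * n₂) ^ (N+1)))
        = fun p : ℝ × ℝ => (-1:ℂ)^(K+1+(L+1)) *
            ((fun u : ℝ => (((u:ℂ) + Complex.I * (((n₁:ℝ)):ℂ)) ^ (K+1) *
                ((u:ℂ) - Complex.I * (((n₁:ℝ)):ℂ)) ^ (L+1))⁻¹) p.1 *
             (fun v : ℝ => (((v:ℂ) + Complex.I * ((n₂:ℝ):ℂ)) ^ (M+1) *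
                ((v:ℂ) - Complex.I * ((n₂:ℝ):ℂ)) ^ (N+1))⁻¹) p.2) := by
      funext p
      rw [div_eq_mul_inv]
      congr 1
      rw [← mul_inv]
      congr 1
      push_cast
      ring
    rw [hprod, MeasureTheory.integral_const_mul, MeasureTheory.Measure.volume_eq_prod,
      MeasureTheory.integral_prod_mul
        (f := fun u : ℝ => (((u:ℂ) + Complex.I * (((n₁:ℝ)):ℂ)) ^ (K+1) *
          ((u:ℂ) - Complex.I * (((n₁:ℝ)):ℂ)) ^ (L+1))⁻¹)
        (g := fun v : ℝ => (((v:ℂ) + Complex.I * ((n₂:ℝ):ℂ)) ^ (M+1) *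
          ((v:ℂ) - Complex.I * ((n₂:ℝ):ℂ)) ^ (N+1))⁻¹),
      oneDim (n₁:ℝ) hn₁R (K+L) K L rfl, oneDim n₂ hpos (M+N) M N rfl]
    push_cast
    linear_combination algPos K L M N hrel ((n₁:ℕ):ℂ) ((n₂:ℝ):ℂ) (((K+L).choose L : ℕ):ℂ)
      (((M+N).choose N : ℕ):ℂ) hxC hyC hπ
end

section
/- For t > 0 and τ₂ > 0, the theta-like sum B(t) = Σ_{(m,n)∈ℤ²} exp{−(π/τ₂) t |m + nτ|²}, with τ = τ₁ + iτ₂, has Fourier expansion in τ₁ given by B(t) = √(τ₂/t) Σ_{m,n∈ℤ} e^{2πi m n τ₁} e^{−π τ₂ m²/t − π τ₂ n² t}; in particular the constant Fourier mode ∫₀¹ B(t) dτ₁ equals √(τ₂/t) Σ_{mn=0} e^{−πτ₂ m²/t − πτ₂ n² t} = √(τ₂/t)(Σ_{m∈ℤ} e^{−πτ₂m²/t} + Σ_{n≠0} e^{−πτ₂ n² t}). -/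
open Complex Real MeasureTheory

/-- The theta-like sum `B(t) = Σ_{(m,n)∈ℤ²} exp{−(π/τ₂) t |m + nτ|²}` with
`τ = τ₁ + iτ₂`, so `|m+nτ|² = (m+nτ₁)² + n²τ₂²`. -/
noncomputable def thetaB (t τ₁ τ₂ : ℝ) : ℝ :=
  ∑' p : ℤ × ℤ,
    Real.exp (-(π / τ₂) * t * (((p.1 : ℝ) + (p.2 : ℝ) * τ₁) ^ 2 + (p.2 : ℝ) ^ 2 * τ₂ ^ 2))


lemma L1 {c : ℝ} (hc : 0 < c) (x : ℝ) :
    Summable fun m : ℤ => Real.exp (-c * ((m : ℝ) + x) ^ 2) := by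
  have hb := summable_pow_mul_jacobiTheta₂_term_bound (c * |x| / π) (div_pos hc Real.pi_pos) 0
  refine Summable.of_nonneg_of_le (fun m => (Real.exp_pos _).le) (fun m => ?_) hb
  rw [pow_zero, one_mul]
  apply Real.exp_le_exp.mpr
  have hπ : (0:ℝ) < π := Real.pi_pos
  have h1 : -π * (c / π * (m:ℝ) ^ 2 - 2 * (c * |x| / π) * |(m:ℝ)|) =
      -c * (m:ℝ)^2 + 2*c*(|x|)*(|(m:ℝ)|) := by
    field_simp
    ring
  rw [show ((|m| : ℤ) : ℝ) = |(m:ℝ)| by push_cast; rfl, h1]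
  have key : (0:ℝ) ≤ (m:ℝ) * x + |(m:ℝ)| * |x| := by
    have := neg_abs_le ((m:ℝ) * x)
    rw [abs_mul] at this
    linarith
  nlinarith [mul_nonneg hc.le key, mul_nonneg hc.le (sq_nonneg x)]

lemma L2 {a : ℝ} (ha : 0 < a) (x : ℝ) :
    ∑' m : ℤ, Complex.exp (-(π : ℂ) * a * ((m : ℂ) + x) ^ 2) =
      (Real.sqrt a⁻¹ : ℂ) *
        ∑' m : ℤ, Complex.exp (-(π : ℂ) * (a : ℂ)⁻¹ * (m : ℂ) ^ 2 + 2 * π * Complex.I * m * x) := by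
  have ha' : (0:ℝ) < a⁻¹ := inv_pos.mpr ha
  have h := Complex.tsum_exp_neg_quadratic (a := (a⁻¹ : ℝ)) (by rwa [Complex.ofReal_re]) (-Complex.I * x)
  -- h : ∑' n, cexp (-π * a⁻¹ * n^2 + 2*π*(-I*x)*n) = 1/(a⁻¹)^(1/2) * ∑' n, cexp (-π/(a⁻¹) * (n + I*(-I*x))^2)
  have e1 : ∀ n : ℤ, (-(π:ℂ) / (a⁻¹ : ℝ) * ((n:ℂ) + Complex.I * (-Complex.I * x)) ^ 2)
      = -(π : ℂ) * a * ((n : ℂ) + x) ^ 2 := by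
    intro n
    have : (Complex.I * (-Complex.I * (x:ℂ))) = (x:ℂ) := by
      rw [show Complex.I * (-Complex.I * (x:ℂ)) = -(Complex.I * Complex.I) * x by ring,
        Complex.I_mul_I]
      ring
    rw [this]
    rw [Complex.ofReal_inv, div_eq_mul_inv, inv_inv]
  simp_rw [e1] at h
  have hcpow : ((a⁻¹ : ℝ) : ℂ) ^ (1/2 : ℂ) = (Real.sqrt a⁻¹ : ℂ) := by
    rw [show ((1:ℂ)/2) = ((1/2 : ℝ) : ℂ) by norm_num, ← Complex.ofReal_cpow ha'.le]
    norm_num [Real.rpow_natCast, ← Real.sqrt_eq_rpow]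
  have hA : ((a⁻¹ : ℝ) : ℂ) ^ (1/2 : ℂ) ≠ 0 := by
    rw [hcpow]
    simpa using Real.sqrt_ne_zero'.mpr ha'
  have h2 : ∑' n : ℤ, Complex.exp (-(π:ℂ) * a * ((n:ℂ) + x) ^ 2) =
      ((a⁻¹ : ℝ) : ℂ) ^ (1/2 : ℂ) *
        ∑' n : ℤ, Complex.exp (-(π:ℂ) * (a⁻¹ : ℝ) * (n:ℂ) ^ 2 + 2 * π * (-Complex.I * x) * n) := by
    rw [h, ← mul_assoc, mul_one_div, div_self hA, one_mul]
  rw [h2, hcpow, ← ((Equiv.neg ℤ).tsum_eq (fun m : ℤ =>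
      Complex.exp (-(π : ℂ) * (a : ℂ)⁻¹ * (m : ℂ) ^ 2 + 2 * π * Complex.I * m * x)))]
  congr 1
  refine tsum_congr fun n => ?_
  congr 1
  push_cast [Equiv.neg_apply]
  ring

lemma normexp (s r : ℝ) : ‖Complex.exp ((s : ℂ) * Complex.I + (r : ℂ))‖ = Real.exp r := by
  rw [Complex.norm_exp]
  simp

lemma L3 {b : ℝ} (hb : 0 < b) (x : ℝ) :
    Summable fun m : ℤ => Complex.exp (-(π : ℂ) * b * (m : ℂ) ^ 2 + 2 * π * Complex.I * m * x) := by
  apply Summable.of_norm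
  have he : ∀ m : ℤ, ‖Complex.exp (-(π : ℂ) * b * (m : ℂ) ^ 2 + 2 * π * Complex.I * m * x)‖
      = Real.exp (-(π * b) * ((m : ℝ) + 0) ^ 2) := by
    intro m
    rw [show (-(π : ℂ) * b * (m : ℂ) ^ 2 + 2 * π * Complex.I * m * x)
        = ((2 * π * m * x : ℝ) : ℂ) * Complex.I + ((-(π * b) * ((m : ℝ) + 0) ^ 2 : ℝ) : ℂ) by
      push_cast; ring, normexp]
  simpa only [he] using L1 (mul_pos Real.pi_pos hb) 0

set_option maxHeartbeats 1000000 in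
lemma part1 (t τ₂ : ℝ) (ht : 0 < t) (hτ₂ : 0 < τ₂) (τ₁ : ℝ) :
    ((thetaB t τ₁ τ₂ : ℝ) : ℂ) =
      (Real.sqrt (τ₂ / t) : ℂ) *
        ∑' p : ℤ × ℤ,
          Complex.exp (2 * π * Complex.I * (p.1 : ℂ) * (p.2 : ℂ) * (τ₁ : ℂ)) *
            Complex.exp (-(π : ℂ) * τ₂ * (p.1 : ℂ) ^ 2 / t - (π : ℂ) * τ₂ * (p.2 : ℂ) ^ 2 * t) := by
  have hat : (0:ℝ) < t / τ₂ := div_pos ht hτ₂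
  have hta : (0:ℝ) < τ₂ / t := div_pos hτ₂ ht
  have htt : (0:ℝ) < t * τ₂ := mul_pos ht hτ₂
  set f : ℤ → ℤ → ℝ := fun m n =>
    Real.exp (-(π * (t/τ₂)) * (((m:ℝ) + n*τ₁)) ^ 2) * Real.exp (-(π * (t*τ₂)) * ((n:ℝ)+0) ^ 2)
    with hf_def
  have hfeq : ∀ p : ℤ × ℤ,
      Real.exp (-(π / τ₂) * t * (((p.1 : ℝ) + (p.2 : ℝ) * τ₁) ^ 2 + (p.2 : ℝ) ^ 2 * τ₂ ^ 2))
        = f p.1 p.2 := by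
    intro p
    rw [hf_def]
    dsimp only
    rw [← Real.exp_add]
    congr 1
    field_simp
    ring
  -- the shifted theta sum and its Poisson transform
  set S : ℝ → ℝ := fun x => ∑' m : ℤ, Real.exp (-(π * (t/τ₂)) * (((m:ℝ) + x)) ^ 2) with hS_def
  have hScast : ∀ x : ℝ, ((S x : ℝ) : ℂ) =
      (Real.sqrt (τ₂ / t) : ℂ) *
        ∑' m : ℤ, Complex.exp (-(π : ℂ) * ((τ₂/t : ℝ) : ℂ) * (m:ℂ) ^ 2
          + 2 * π * Complex.I * m * x) := by
    intro x
    rw [hS_def, Complex.ofReal_tsum]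
    have : ∀ m : ℤ, ((Real.exp (-(π * (t/τ₂)) * (((m:ℝ) + x)) ^ 2) : ℝ) : ℂ)
        = Complex.exp (-(π:ℂ) * ((t/τ₂ : ℝ):ℂ) * ((m:ℂ) + (x:ℂ)) ^ 2) := by
      intro m
      rw [Complex.ofReal_exp]
      congr 1
      push_cast
      ring
    rw [tsum_congr this, L2 hat x, ← Complex.ofReal_inv, inv_div]
  have hSnonneg : ∀ x : ℝ, 0 ≤ S x := fun x => tsum_nonneg fun m => (Real.exp_pos _).le
  -- uniform bound on S
  set M : ℝ := Real.sqrt (τ₂ / t) * ∑' m : ℤ, Real.exp (-(π * (τ₂/t)) * ((m:ℝ)+0) ^ 2) with hM_def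
  have hSle : ∀ x : ℝ, S x ≤ M := by
    intro x
    have h1 : S x = ‖((S x : ℝ) : ℂ)‖ := by
      rw [Complex.norm_real, Real.norm_eq_abs, _root_.abs_of_nonneg (hSnonneg x)]
    rw [h1, hScast x, norm_mul, Complex.norm_real, Real.norm_eq_abs,
      _root_.abs_of_nonneg (Real.sqrt_nonneg _), hM_def]
    have hnorm : ∀ m : ℤ, ‖Complex.exp (-(π : ℂ) * ((τ₂/t : ℝ) : ℂ) * (m:ℂ) ^ 2
        + 2 * π * Complex.I * m * x)‖ = Real.exp (-(π * (τ₂/t)) * ((m:ℝ)+0) ^ 2) := by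
      intro m
      rw [show (-(π : ℂ) * ((τ₂/t : ℝ) : ℂ) * (m:ℂ) ^ 2 + 2 * π * Complex.I * m * x)
          = ((2 * π * m * x : ℝ) : ℂ) * Complex.I + ((-(π * (τ₂/t)) * ((m:ℝ)+0) ^ 2 : ℝ) : ℂ) by
        push_cast; ring, normexp]
    refine mul_le_mul_of_nonneg_left ?_ (Real.sqrt_nonneg _)
    calc ‖∑' m : ℤ, Complex.exp (-(π : ℂ) * ((τ₂/t : ℝ) : ℂ) * (m:ℂ) ^ 2
          + 2 * π * Complex.I * m * x)‖
        ≤ ∑' m : ℤ, ‖Complex.exp (-(π : ℂ) * ((τ₂/t : ℝ) : ℂ) * (m:ℂ) ^ 2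
          + 2 * π * Complex.I * m * x)‖ := by
          apply norm_tsum_le_tsum_norm
          simpa only [hnorm] using L1 (mul_pos Real.pi_pos hta) 0
      _ = ∑' m : ℤ, Real.exp (-(π * (τ₂/t)) * ((m:ℝ)+0) ^ 2) := tsum_congr hnorm
  -- summability of the double sum, n-outer orientation
  have hrow : ∀ n : ℤ, Summable fun m : ℤ => f m n := by
    intro n
    exact (L1 (mul_pos Real.pi_pos hat) ((n:ℝ)*τ₁)).mul_right _
  have hrowsum : ∀ n : ℤ, ∑' m : ℤ, f m n = S ((n:ℝ)*τ₁) * Real.exp (-(π * (t*τ₂)) * ((n:ℝ)+0) ^ 2) := by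
    intro n
    rw [hS_def]
    exact tsum_mul_right
  have hsum_swapped : Summable fun q : ℤ × ℤ => f q.2 q.1 := by
    rw [summable_prod_of_nonneg (fun q => mul_nonneg (Real.exp_pos _).le (Real.exp_pos _).le)]
    refine ⟨fun n => hrow n, ?_⟩
    refine Summable.of_nonneg_of_le (fun n => tsum_nonneg fun m => mul_nonneg (Real.exp_pos _).le (Real.exp_pos _).le)
      (fun n => ?_) ((L1 (mul_pos Real.pi_pos htt) 0).mul_left M)
    rw [hrowsum n]
    exact mul_le_mul_of_nonneg_right (hSle _) (Real.exp_pos _).le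
  have hsum_f : Summable fun p : ℤ × ℤ => f p.1 p.2 :=
    (Equiv.prodComm ℤ ℤ).summable_iff.mp hsum_swapped
  -- summability of the RHS complex series
  set h : ℤ × ℤ → ℂ := fun p =>
    Complex.exp (2 * π * Complex.I * (p.1 : ℂ) * (p.2 : ℂ) * (τ₁ : ℂ)) *
      Complex.exp (-(π : ℂ) * τ₂ * (p.1 : ℂ) ^ 2 / t - (π : ℂ) * τ₂ * (p.2 : ℂ) ^ 2 * t)
    with hh_def
  have hhnorm : ∀ p : ℤ × ℤ, ‖h p‖ =
      Real.exp (-(π * (τ₂/t)) * ((p.1:ℝ)+0) ^ 2) * Real.exp (-(π * (τ₂*t)) * ((p.2:ℝ)+0) ^ 2) := by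
    intro p
    rw [hh_def]
    dsimp only
    rw [← Complex.exp_add, ← Real.exp_add, show
      (2 * (π:ℂ) * Complex.I * (p.1 : ℂ) * (p.2 : ℂ) * (τ₁ : ℂ) +
        (-(π : ℂ) * τ₂ * (p.1 : ℂ) ^ 2 / t - (π : ℂ) * τ₂ * (p.2 : ℂ) ^ 2 * t))
      = ((2 * π * p.1 * p.2 * τ₁ : ℝ) : ℂ) * Complex.I +
        ((-(π * (τ₂/t)) * ((p.1:ℝ)+0) ^ 2 + -(π * (τ₂*t)) * ((p.2:ℝ)+0) ^ 2 : ℝ) : ℂ) by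
      push_cast; ring, normexp]
  have hh_sum : Summable h := by
    apply Summable.of_norm
    simp only [hhnorm]
    exact Summable.mul_of_nonneg (L1 (mul_pos Real.pi_pos hta) 0)
      (L1 (mul_pos Real.pi_pos (mul_pos hτ₂ ht)) 0)
      (fun m => (Real.exp_pos _).le) (fun n => (Real.exp_pos _).le)
  -- step B : per-n identity
  have hB : ∀ n : ℤ, ((∑' m : ℤ, f m n : ℝ) : ℂ) =
      (Real.sqrt (τ₂ / t) : ℂ) * ∑' m : ℤ, h (m, n) := by
    intro n
    rw [hrowsum n, Complex.ofReal_mul, hScast ((n:ℝ)*τ₁), mul_assoc,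
      ← tsum_mul_right (f := fun m : ℤ => Complex.exp (-(π : ℂ) * ((τ₂/t : ℝ) : ℂ) * (m:ℂ) ^ 2
        + 2 * π * Complex.I * m * ((n:ℝ)*τ₁ : ℝ)))]
    congr 1
    refine tsum_congr fun m => ?_
    rw [hh_def]
    dsimp only
    rw [Complex.ofReal_exp, ← Complex.exp_add, ← Complex.exp_add]
    congr 1
    push_cast
    have htc : (t:ℂ) ≠ 0 := Complex.ofReal_ne_zero.mpr ht.ne'
    field_simp
    ring
  -- assemble
  calc ((thetaB t τ₁ τ₂ : ℝ) : ℂ)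
      = ((∑' q : ℤ × ℤ, f q.2 q.1 : ℝ) : ℂ) := by
        rw [thetaB, tsum_congr hfeq,
          ← ((Equiv.prodComm ℤ ℤ).tsum_eq (fun p : ℤ × ℤ => f p.1 p.2))]
        rfl
    _ = ∑' n : ℤ, ((∑' m : ℤ, f m n : ℝ) : ℂ) := by
        rw [Summable.tsum_prod hsum_swapped, Complex.ofReal_tsum]
    _ = ∑' n : ℤ, ((Real.sqrt (τ₂ / t) : ℂ) * ∑' m : ℤ, h (m, n)) := tsum_congr hB
    _ = (Real.sqrt (τ₂ / t) : ℂ) * ∑' n : ℤ, ∑' m : ℤ, h (m, n) := tsum_mul_left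
    _ = (Real.sqrt (τ₂ / t) : ℂ) * ∑' p : ℤ × ℤ, h p := by
        congr 1
        rw [← ((Equiv.prodComm ℤ ℤ).tsum_eq h)]
        exact (Summable.tsum_prod ((Equiv.prodComm ℤ ℤ).summable_iff.mpr hh_sum)).symm

set_option maxHeartbeats 1000000 in
lemma part2 (t τ₂ : ℝ) (ht : 0 < t) (hτ₂ : 0 < τ₂) :
    (∫ τ₁ in (0 : ℝ)..1, thetaB t τ₁ τ₂) =
      Real.sqrt (τ₂ / t) *
        ((∑' m : ℤ, Real.exp (-π * τ₂ * (m : ℝ) ^ 2 / t)) +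
          ∑' n : {n : ℤ // n ≠ 0}, Real.exp (-π * τ₂ * ((n : ℤ) : ℝ) ^ 2 * t)) := by
  have hta : (0:ℝ) < τ₂ / t := div_pos hτ₂ ht
  set C : ℤ × ℤ → ℂ := fun p =>
    Complex.exp (-(π : ℂ) * τ₂ * (p.1 : ℂ) ^ 2 / t - (π : ℂ) * τ₂ * (p.2 : ℂ) ^ 2 * t) with hC_def
  set h : ℤ × ℤ → ℝ → ℂ := fun p τ₁ =>
    Complex.exp (2 * π * Complex.I * (p.1 : ℂ) * (p.2 : ℂ) * (τ₁ : ℂ)) * C p with hh_def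
  set g : ℤ × ℤ → ℝ := fun p =>
    Real.exp (-(π * (τ₂/t)) * ((p.1:ℝ)+0) ^ 2) * Real.exp (-(π * (τ₂*t)) * ((p.2:ℝ)+0) ^ 2)
    with hg_def
  have hgnonneg : ∀ p, 0 ≤ g p := fun p => mul_nonneg (Real.exp_pos _).le (Real.exp_pos _).le
  have hg_sum : Summable g :=
    Summable.mul_of_nonneg (L1 (mul_pos Real.pi_pos hta) 0)
      (L1 (mul_pos Real.pi_pos (mul_pos hτ₂ ht)) 0)
      (fun m => (Real.exp_pos _).le) (fun n => (Real.exp_pos _).le)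
  have hhnorm : ∀ p τ₁, ‖h p τ₁‖ = g p := by
    intro p τ₁
    rw [hh_def, hC_def, hg_def]
    dsimp only
    rw [← Complex.exp_add, ← Real.exp_add, show
      (2 * (π:ℂ) * Complex.I * (p.1 : ℂ) * (p.2 : ℂ) * (τ₁ : ℂ) +
        (-(π : ℂ) * τ₂ * (p.1 : ℂ) ^ 2 / t - (π : ℂ) * τ₂ * (p.2 : ℂ) ^ 2 * t))
      = ((2 * π * p.1 * p.2 * τ₁ : ℝ) : ℂ) * Complex.I +
        ((-(π * (τ₂/t)) * ((p.1:ℝ)+0) ^ 2 + -(π * (τ₂*t)) * ((p.2:ℝ)+0) ^ 2 : ℝ) : ℂ) by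
      push_cast; ring, normexp]
  set val₁ : ℤ × ℤ → ℂ := fun p =>
    if p.2 = 0 then Complex.exp ((-π * τ₂ * (p.1:ℝ) ^ 2 / t : ℝ) : ℂ) else 0 with hv1_def
  set val₂ : ℤ × ℤ → ℂ := fun p =>
    if p.1 = 0 ∧ p.2 ≠ 0 then Complex.exp ((-π * τ₂ * (p.2:ℝ) ^ 2 * t : ℝ) : ℂ) else 0 with hv2_def
  -- the integral of each term
  have hval : ∀ p : ℤ × ℤ, (∫ τ₁ in Set.Ioc (0:ℝ) 1, h p τ₁) = val₁ p + val₂ p := by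
    intro p
    rw [← intervalIntegral.integral_of_le zero_le_one]
    have hmc : ∀ τ₁ : ℝ, h p τ₁
        = Complex.exp ((2 * π * Complex.I * (p.1 : ℂ) * (p.2 : ℂ)) * (τ₁ : ℂ)) * C p := by
      intro τ₁; rw [hh_def]
    simp_rw [hmc]
    rw [intervalIntegral.integral_mul_const]
    rcases eq_or_ne p.2 0 with h2 | h2
    · have : (2 * (π:ℂ) * Complex.I * (p.1 : ℂ) * (p.2 : ℂ)) = 0 := by
        rw [h2]; simp
      rw [this]
      simp only [zero_mul, Complex.exp_zero, hv1_def, hv2_def, h2]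
      simp only [if_pos rfl, reduceIte, and_false, if_false, add_zero]
      rw [intervalIntegral.integral_const]
      simp only [sub_zero, one_smul, one_mul, hC_def]
      rw [show (if p.1 = 0 ∧ ¬(0:ℤ) = 0 then cexp ((-π * τ₂ * ((0:ℤ):ℝ) ^ 2 * t : ℝ) : ℂ) else 0) = 0 by simp, add_zero]
      congr 1
      push_cast [h2]
      ring
    · rcases eq_or_ne p.1 0 with h1 | h1
      · have : (2 * (π:ℂ) * Complex.I * (p.1 : ℂ) * (p.2 : ℂ)) = 0 := by
          rw [h1]; simp
        rw [this]
        simp only [zero_mul, Complex.exp_zero, hv1_def, hv2_def]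
        simp only [if_neg h2, if_pos (⟨h1, h2⟩ : p.1 = 0 ∧ p.2 ≠ 0), zero_add]
        rw [intervalIntegral.integral_const]
        simp only [sub_zero, one_smul, one_mul, hC_def]
        congr 1
        push_cast [h1]
        ring
      · have hc : (2 * (π:ℂ) * Complex.I * (p.1 : ℂ) * (p.2 : ℂ)) ≠ 0 := by
          apply mul_ne_zero (mul_ne_zero (mul_ne_zero (mul_ne_zero two_ne_zero ?_)
            Complex.I_ne_zero) ?_) ?_
          · exact_mod_cast Complex.ofReal_ne_zero.mpr Real.pi_ne_zero
          · exact_mod_cast Int.cast_ne_zero.mpr h1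
          · exact_mod_cast Int.cast_ne_zero.mpr h2
        rw [integral_exp_mul_complex hc]
        rw [show (2 * (π:ℂ) * Complex.I * (p.1 : ℂ) * (p.2 : ℂ)) * (1:ℝ)
            = ((p.1 * p.2 : ℤ) : ℂ) * (2 * π * Complex.I) by push_cast; ring,
          Complex.exp_int_mul_two_pi_mul_I]
        simp only [Complex.ofReal_zero, mul_zero, Complex.exp_zero, sub_self, zero_div, zero_mul,
          hv1_def, hv2_def, if_neg h2]
        have : ¬(p.1 = 0 ∧ p.2 ≠ 0) := fun hx => h1 hx.1
        rw [if_neg this, add_zero]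
  -- measurability and lintegral bound for swapping sum and integral
  have hmeas : ∀ p : ℤ × ℤ, AEStronglyMeasurable (h p) (volume.restrict (Set.Ioc (0:ℝ) 1)) := by
    intro p
    apply Continuous.aestronglyMeasurable
    rw [hh_def]
    exact (Complex.continuous_exp.comp (by fun_prop)).mul continuous_const
  have hlint : ∑' p : ℤ × ℤ, ∫⁻ τ₁ in Set.Ioc (0:ℝ) 1, ‖h p τ₁‖₊ ≠ ⊤ := by
    have hpt : ∀ p : ℤ × ℤ, ∫⁻ τ₁ in Set.Ioc (0:ℝ) 1, (‖h p τ₁‖₊ : ENNReal)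
        = (((g p).toNNReal : NNReal) : ENNReal) := by
      intro p
      have hc : ∀ τ₁ : ℝ, (‖h p τ₁‖₊ : ENNReal) = (((g p).toNNReal : NNReal) : ENNReal) := by
        intro τ₁
        rw [← enorm_eq_nnnorm, ← ofReal_norm, hhnorm p τ₁]
        rfl
      simp_rw [hc]
      rw [MeasureTheory.lintegral_const, Measure.restrict_apply MeasurableSet.univ,
        Set.univ_inter, Real.volume_Ioc]
      norm_num
    rw [tsum_congr hpt]
    exact ENNReal.tsum_coe_ne_top_iff_summable.mpr hg_sum.toNNReal
  -- summability of the two pieces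
  have hv1sum : Summable val₁ := by
    apply Summable.of_norm_bounded hg_sum
    intro p
    rcases eq_or_ne p.2 0 with h2 | h2
    · rw [hv1_def]
      dsimp only
      rw [if_pos h2, Complex.norm_exp, Complex.ofReal_re, hg_def]
      dsimp only
      refine le_of_eq ?_
      rw [← Real.exp_add]
      congr 1
      rw [show ((p.2 : ℝ)) = ((0:ℤ):ℝ) by exact_mod_cast congrArg (Int.cast : ℤ → ℝ) h2]
      push_cast
      ring
    · rw [hv1_def]
      dsimp only
      rw [if_neg h2, norm_zero]
      exact hgnonneg p
  have hv2sum : Summable val₂ := by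
    apply Summable.of_norm_bounded hg_sum
    intro p
    rcases Decidable.em (p.1 = 0 ∧ p.2 ≠ 0) with h12 | h12
    · rw [hv2_def]
      dsimp only
      rw [if_pos h12, Complex.norm_exp, Complex.ofReal_re, hg_def]
      dsimp only
      refine le_of_eq ?_
      rw [← Real.exp_add]
      congr 1
      rw [show ((p.1 : ℝ)) = ((0:ℤ):ℝ) by exact_mod_cast congrArg (Int.cast : ℤ → ℝ) h12.1]
      push_cast
      ring
    · rw [hv2_def]
      dsimp only
      rw [if_neg h12, norm_zero]
      exact hgnonneg p
  -- evaluating the two pieces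
  have hv1tsum : ∑' p : ℤ × ℤ, val₁ p
      = ∑' m : ℤ, Complex.exp ((-π * τ₂ * (m:ℝ) ^ 2 / t : ℝ) : ℂ) := by
    have inj1 : Function.Injective (fun m : ℤ => ((m, 0) : ℤ × ℤ)) := by
      intro a b hab
      exact (Prod.ext_iff.mp hab).1
    have hoff : ∀ p : ℤ × ℤ, p ∉ Set.range (fun m : ℤ => ((m, 0) : ℤ × ℤ)) → val₁ p = 0 := by
      intro p hp
      rw [hv1_def]
      dsimp only
      rw [if_neg]
      intro h2
      exact hp ⟨p.1, Prod.ext rfl h2.symm⟩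
    rw [← inj1.tsum_eq (Function.support_subset_iff'.mpr hoff)]
    refine tsum_congr fun m => ?_
    rw [hv1_def]
    dsimp only
    rw [if_pos rfl]
  have hv2tsum : ∑' p : ℤ × ℤ, val₂ p
      = ∑' n : {n : ℤ // n ≠ 0}, Complex.exp ((-π * τ₂ * ((n:ℤ):ℝ) ^ 2 * t : ℝ) : ℂ) := by
    have inj2 : Function.Injective (fun n : {n : ℤ // n ≠ 0} => (((0:ℤ), (n:ℤ)) : ℤ × ℤ)) := by
      intro a b hab
      exact Subtype.ext (Prod.ext_iff.mp hab).2
    have hoff : ∀ p : ℤ × ℤ, p ∉ Set.range (fun n : {n : ℤ // n ≠ 0} => (((0:ℤ), (n:ℤ)) : ℤ × ℤ))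
        → val₂ p = 0 := by
      intro p hp
      rw [hv2_def]
      dsimp only
      rw [if_neg]
      intro h12
      exact hp ⟨⟨p.2, h12.2⟩, Prod.ext h12.1.symm rfl⟩
    rw [← inj2.tsum_eq (Function.support_subset_iff'.mpr hoff)]
    refine tsum_congr fun n => ?_
    rw [hv2_def]
    dsimp only
    rw [if_pos ⟨rfl, n.2⟩]
  -- assemble everything over ℂ
  have key : (((∫ τ₁ in (0:ℝ)..1, thetaB t τ₁ τ₂) : ℝ) : ℂ) =
      ((Real.sqrt (τ₂ / t) *
        ((∑' m : ℤ, Real.exp (-π * τ₂ * (m : ℝ) ^ 2 / t)) +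
          ∑' n : {n : ℤ // n ≠ 0}, Real.exp (-π * τ₂ * ((n : ℤ) : ℝ) ^ 2 * t)) : ℝ) : ℂ) := by
    rw [← intervalIntegral.integral_ofReal]
    calc ∫ τ₁ in (0:ℝ)..1, ((thetaB t τ₁ τ₂ : ℝ) : ℂ)
        = ∫ τ₁ in (0:ℝ)..1, ((Real.sqrt (τ₂/t) : ℂ) * ∑' p : ℤ × ℤ, h p τ₁) := by
          apply intervalIntegral.integral_congr
          intro τ₁ _
          exact part1 t τ₂ ht hτ₂ τ₁
      _ = (Real.sqrt (τ₂/t) : ℂ) * ∫ τ₁ in (0:ℝ)..1, ∑' p : ℤ × ℤ, h p τ₁ :=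
          intervalIntegral.integral_const_mul _ _
      _ = (Real.sqrt (τ₂/t) : ℂ) * ∫ τ₁ in Set.Ioc (0:ℝ) 1, ∑' p : ℤ × ℤ, h p τ₁ := by
          rw [intervalIntegral.integral_of_le zero_le_one]
      _ = (Real.sqrt (τ₂/t) : ℂ) * ∑' p : ℤ × ℤ, ∫ τ₁ in Set.Ioc (0:ℝ) 1, h p τ₁ := by
          rw [MeasureTheory.integral_tsum hmeas hlint]
      _ = (Real.sqrt (τ₂/t) : ℂ) * ∑' p : ℤ × ℤ, (val₁ p + val₂ p) := by
          rw [tsum_congr hval]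
      _ = (Real.sqrt (τ₂/t) : ℂ) * ((∑' p : ℤ × ℤ, val₁ p) + ∑' p : ℤ × ℤ, val₂ p) := by
          rw [Summable.tsum_add hv1sum hv2sum]
      _ = ((Real.sqrt (τ₂ / t) *
            ((∑' m : ℤ, Real.exp (-π * τ₂ * (m : ℝ) ^ 2 / t)) +
              ∑' n : {n : ℤ // n ≠ 0}, Real.exp (-π * τ₂ * ((n : ℤ) : ℝ) ^ 2 * t)) : ℝ) : ℂ) := by
          rw [hv1tsum, hv2tsum, Complex.ofReal_mul, Complex.ofReal_add, Complex.ofReal_tsum,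
            Complex.ofReal_tsum]
          congr 1
          congr 1 <;> exact tsum_congr fun _ => (Complex.ofReal_exp _).symm
  exact Complex.ofReal_injective key

theorem thetaB_poisson_and_constant_mode (t τ₂ : ℝ) (ht : 0 < t) (hτ₂ : 0 < τ₂) :
    (∀ τ₁ : ℝ,
      ((thetaB t τ₁ τ₂ : ℝ) : ℂ) =
        (Real.sqrt (τ₂ / t) : ℂ) *
          ∑' p : ℤ × ℤ,
            Complex.exp (2 * π * Complex.I * (p.1 : ℂ) * (p.2 : ℂ) * (τ₁ : ℂ)) *
              Complex.exp (-(π : ℂ) * τ₂ * (p.1 : ℂ) ^ 2 / t - (π : ℂ) * τ₂ * (p.2 : ℂ) ^ 2 * t)) ∧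
    (∫ τ₁ in (0 : ℝ)..1, thetaB t τ₁ τ₂) =
      Real.sqrt (τ₂ / t) *
        ((∑' m : ℤ, Real.exp (-π * τ₂ * (m : ℝ) ^ 2 / t)) +
          ∑' n : {n : ℤ // n ≠ 0}, Real.exp (-π * τ₂ * ((n : ℤ) : ℝ) ^ 2 * t)) :=
  ⟨fun τ₁ => part1 t τ₂ ht hτ₂ τ₁, part2 t τ₂ ht hτ₂⟩
end
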